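/- arXiv:2008.02345 — 4 statements merged into one kernel-verified Lean document; each statement's English description precedes it below -/
import Mathlib

section
/- Let X and Y be totally ordered sets with |X| ≥ 3 and |Y| ≥ 3, and let m ≥ 2 be an integer with m < min(|X|,|Y|). Let M be the left Kan extension of the module Z_m along a product poset injection ψ : ⟦1,m+1⟧² ↪ X×Y. Then: (i) M is not interval-decomposable; (ii) for every product subset X'×Y' ⊆ X×Y with |X'| ≤ m and |Y'| ≤ m, the restriction M|_{X'×Y'} is interval-decomposable, i.e. M|_{X'×Y'} ∈ Dec(Int(X'×Y')). -/
open CategoryTheory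

attribute [local instance 10000] Preorder.smallCategory

attribute [local instance] Classical.propDecidable

abbrev PersistenceModule (K : Type) [Field K] (P : Type) [Preorder P] := P ⥤ ModuleCat.{0} K

variable (K : Type) [Field K]

/-- The internal linear map of a persistence module associated to `s ≤ t`. -/
def rho {P : Type} [Preorder P] (M : PersistenceModule K P) {s t : P} (h : s ≤ t) :
    M.obj s →ₗ[K] M.obj t :=
  (M.map (homOfLE h)).hom

def Pfd {P : Type} [Preorder P] (M : PersistenceModule K P) : Prop :=
  ∀ p : P, FiniteDimensional K (M.obj p)

def IsConvexSet {P : Type} [Preorder P] (S : Set P) : Prop :=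
  ∀ ⦃p s q : P⦄, p ≤ s → s ≤ q → p ∈ S → q ∈ S → s ∈ S

def IsConnectedSet {P : Type} [Preorder P] (S : Set P) : Prop :=
  ∀ p ∈ S, ∀ q ∈ S,
    Relation.ReflTransGen (fun a b => a ∈ S ∧ b ∈ S ∧ (a ≤ b ∨ b ≤ a)) p q

def IsIntervalSet {P : Type} [Preorder P] (S : Set P) : Prop :=
  IsConvexSet S ∧ IsConnectedSet S

def IsRectangleSet {X Y : Type} [Preorder X] [Preorder Y] (R : Set (X × Y)) : Prop :=
  ∃ (I : Set X) (J : Set Y), IsIntervalSet I ∧ IsIntervalSet J ∧ R = I ×ˢ J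

/-- The direct sum of the interval (indicator) modules of a family of convex sets. -/
noncomputable def intervalDirectSum {P : Type} [Preorder P] {ι : Type} (S : ι → Set P)
    (hS : ∀ i, IsConvexSet (S i)) : PersistenceModule K P where
  obj t := ModuleCat.of K ({i : ι // t ∈ S i} → K)
  map {s t} _ := ModuleCat.ofHom
    (LinearMap.pi (fun j : {i : ι // t ∈ S i} =>
      if hs : (s : P) ∈ S j.1 then LinearMap.proj (⟨j.1, hs⟩ : {i : ι // s ∈ S i}) else 0))
  map_id t := by
    refine ModuleCat.hom_ext (LinearMap.ext fun v => funext fun j => ?_)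
    show ((if hs : (t : P) ∈ S j.1 then
        LinearMap.proj (⟨j.1, hs⟩ : {i : ι // t ∈ S i}) else 0 :
          ({i : ι // t ∈ S i} → K) →ₗ[K] K)) v = v j
    rw [dif_pos j.2]
    rfl
  map_comp {s t u} f g := by
    refine ModuleCat.hom_ext (LinearMap.ext fun v => funext fun j => ?_)
    show ((if hs : (s : P) ∈ S j.1 then
        LinearMap.proj (⟨j.1, hs⟩ : {i : ι // s ∈ S i}) else 0 :
          ({i : ι // s ∈ S i} → K) →ₗ[K] K)) v =
      ((if ht : (t : P) ∈ S j.1 then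
        LinearMap.proj (⟨j.1, ht⟩ : {i : ι // t ∈ S i}) else 0 :
          ({i : ι // t ∈ S i} → K) →ₗ[K] K))
        (LinearMap.pi (fun j' : {i : ι // t ∈ S i} =>
          (if hs : (s : P) ∈ S j'.1 then
            LinearMap.proj (⟨j'.1, hs⟩ : {i : ι // s ∈ S i}) else 0 :
              ({i : ι // s ∈ S i} → K) →ₗ[K] K)) v)
    by_cases hs : (s : P) ∈ S j.1
    · have ht : (t : P) ∈ S j.1 := hS j.1 (leOfHom f) (leOfHom g) hs j.2
      rw [dif_pos hs, dif_pos ht, LinearMap.proj_apply, LinearMap.proj_apply,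
        LinearMap.pi_apply, dif_pos hs]
      rfl
    · by_cases ht : (t : P) ∈ S j.1
      · rw [dif_neg hs, dif_pos ht, LinearMap.zero_apply, LinearMap.proj_apply,
          LinearMap.pi_apply, dif_neg hs, LinearMap.zero_apply]
      · rw [dif_neg hs, dif_neg ht, LinearMap.zero_apply, LinearMap.zero_apply]

def InDec {P : Type} [Preorder P] (M : PersistenceModule K P) (𝒮 : Set (Set P)) : Prop :=
  ∃ (ι : Type) (S : ι → Set P) (hS : ∀ i, IsConvexSet (S i)),
    (∀ i, S i ∈ 𝒮) ∧ (∀ t : P, {i | t ∈ S i}.Finite) ∧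
      Nonempty (M ≅ intervalDirectSum K S hS)

def restrictMod {P : Type} [Preorder P] (M : PersistenceModule K P) (Q : Set P) :
    PersistenceModule K ↥Q :=
  (Subtype.mono_coe (· ∈ Q)).functor ⋙ M

def restrictClass {P : Type} (𝒮 : Set (Set P)) (Q : Set P) : Set (Set ↥Q) :=
  {T | ∃ S ∈ 𝒮, T = Subtype.val ⁻¹' S}

/-- Weak exactness of a persistence bimodule. -/
def WeaklyExact {X Y : Type} [Preorder X] [Preorder Y]
    (M : PersistenceModule K (X × Y)) : Prop :=
  ∀ (s t : X × Y) (h : s ≤ t),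
    (LinearMap.range (rho K M h) =
      LinearMap.range (rho K M (show (t.1, s.2) ≤ t from ⟨le_rfl, h.2⟩)) ⊓
      LinearMap.range (rho K M (show (s.1, t.2) ≤ t from ⟨h.1, le_rfl⟩))) ∧
    (LinearMap.ker (rho K M h) =
      LinearMap.ker (rho K M (show s ≤ (t.1, s.2) from ⟨h.1, le_rfl⟩)) ⊔
      LinearMap.ker (rho K M (show s ≤ (s.1, t.2) from ⟨le_rfl, h.2⟩)))

/-- A monotone family of submodules of a fixed vector space determines a persistence module
whose internal maps are the inclusions. -/
noncomputable def submoduleFunctor {P : Type} [Preorder P] {V : Type} [AddCommGroup V]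
    [Module K V] (S : P → Submodule K V) (hS : Monotone S) : PersistenceModule K P where
  obj p := ModuleCat.of K ↥(S p)
  map {p q} f := ModuleCat.ofHom (Submodule.inclusion (hS (leOfHom f)))
  map_id p := ModuleCat.hom_ext (LinearMap.ext fun x => rfl)
  map_comp {p q r} f g := ModuleCat.hom_ext (LinearMap.ext fun x => rfl)

/-- The submodule of `k^m` attached to the point `(i, j)` of the grid `⟦1,m+1⟧²` (indexed here
by `Fin (m+1) × Fin (m+1)`, zero-based) in the module `Z_m`: the zero space strictly below the
antidiagonal; on the antidiagonal, the `i`-th coordinate axis (image of `ι_i`) for `i < m` and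
the diagonal line (image of `δ_m`) at the corner `(m+1, 1)`; and all of `k^m` strictly above
the antidiagonal.  The internal maps of `Z_m` are the inclusions of these subspaces. -/
noncomputable def Zsub (m : ℕ) (p : Fin (m + 1) × Fin (m + 1)) : Submodule K (Fin m → K) :=
  if p.1.val + p.2.val < m then ⊥
  else if p.1.val + p.2.val = m then
    (if h : p.1.val < m then Submodule.span K {Pi.single (⟨p.1.val, h⟩ : Fin m) (1 : K)}
     else Submodule.span K {fun _ : Fin m => (1 : K)})
  else ⊤

theorem Zsub_monotone (m : ℕ) : Monotone (Zsub K m) := by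
  intro p q hpq
  have h1 : p.1.val ≤ q.1.val := hpq.1
  have h2 : p.2.val ≤ q.2.val := hpq.2
  unfold Zsub
  split_ifs with hp1 hq1 hq2 hq1 hp2 hq2 hq3 hp hq hq hq hq <;>
    first
      | exact bot_le
      | exact le_top
      | omega
      | (have : p = q := by
          refine Prod.ext (Fin.ext ?_) (Fin.ext ?_) <;> omega
         subst this
         rfl)

/-- The left Kan extension of `Z_m` along the product poset injection
`ψ = f × g : ⟦1,m+1⟧² ↪ X × Y`: at `t` it is `(Z_m)_{max ψ_{≤t}}` when
`ψ_{≤t} = {u | ψ(u) ≤ t}` is nonempty (realized as the directed supremum of the monotone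
family `Zsub` over `ψ_{≤t}`) and `0` otherwise, with internal morphisms the inclusions. -/
noncomputable def kanSub {X Y : Type} [LinearOrder X] [LinearOrder Y] (m : ℕ)
    (f : Fin (m + 1) → X) (g : Fin (m + 1) → Y) (t : X × Y) : Submodule K (Fin m → K) :=
  ⨆ (u : Fin (m + 1) × Fin (m + 1)) (_ : ((f u.1, g u.2) : X × Y) ≤ t), Zsub K m u

theorem kanSub_monotone {X Y : Type} [LinearOrder X] [LinearOrder Y] (m : ℕ)
    (f : Fin (m + 1) → X) (g : Fin (m + 1) → Y) : Monotone (kanSub K m f g) := by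
  intro s t h
  refine iSup_le fun u => iSup_le fun hu => ?_
  exact le_iSup_of_le u (le_iSup_of_le (hu.trans h) le_rfl)

/-- The left Kan extension `M` of `Z_m` along `ψ`, as a persistence module over `X × Y`. -/
noncomputable def kanModule {X Y : Type} [LinearOrder X] [LinearOrder Y] (m : ℕ)
    (f : Fin (m + 1) → X) (g : Fin (m + 1) → Y) : PersistenceModule K (X × Y) :=
  submoduleFunctor K (kanSub K m f g) (kanSub_monotone K m f g)

/-!
At `T = ψ(m+1, m+1)` the module is `k^m`, and the `m+1` antidiagonal points `ψ(i, m+2-i)` lie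
below `T` and carry the lines spanned by `e_1, …, e_m` and `(1, …, 1)`, any two of which are
independent once `m ≥ 2`. In a direct sum of interval modules, a vector coming from a point where
the module is one-dimensional maps to a multiple of a single coordinate vector at `T`. There are
only `m` coordinates at `T`, so two of the `m+1` antidiagonal lines would coincide.

Over `X' × Y'` with `|X'| ≤ m`, every value of `M` is `0`, `k^m`, or the line spanned by the
generator with index `a = max {i | f i ≤ x}` for some `x ∈ X'`. At most `m` of the `m+1`
generators occur; since the only linear relation among all of them involves every generator,
those that occur are independent and extend to a basis of `k^m` adapted to every value of `M`. Each basis vector is then supported on the trace of an upper set of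
`X × Y`, which is an interval.
-/

lemma exists_span_singleton_eq_span_single {ι : Type} [DecidableEq ι] {y : ι → K}
    (hy : y ≠ 0) (hsupp : (Function.support y).Subsingleton) :
    ∃ j, K ∙ y = K ∙ Pi.single j 1 := by
  obtain ⟨j, hj⟩ := Function.ne_iff.1 hy
  have hy_single : y = Pi.single j (y j) := by
    funext j'
    by_cases hj' : j' = j
    · subst hj'; simp
    · rw [Pi.single_eq_of_ne hj']
      by_contra hne
      exact hj' (hsupp hne hj)
  refine ⟨j, ?_⟩
  rw [hy_single, ← mul_one (y j), ← smul_eq_mul, Pi.single_smul',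
    Submodule.span_singleton_smul_eq (IsUnit.mk0 _ hj)]

section IntervalDirectSum

variable {P : Type} [Preorder P] {ι : Type} (S : ι → Set P) (hS : ∀ i, IsConvexSet (S i))

lemma intervalDirectSum_map_apply {s t : P} (h : s ⟶ t)
    (v : {i // s ∈ S i} → K) (j : {i // t ∈ S i}) :
    ((intervalDirectSum K S hS).map h).hom v j =
      if hs : s ∈ S j.1 then v ⟨j.1, hs⟩ else 0 := by
  show (if hs : s ∈ S j.1 then LinearMap.proj _ else 0 :
    ({i // s ∈ S i} → K) →ₗ[K] K) v = _
  split_ifs <;> rfl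

lemma support_intervalDirectSum_map_subsingleton {s t : P} (h : s ⟶ t)
    [Subsingleton {i // s ∈ S i}] (v : {i // s ∈ S i} → K) :
    (Function.support (((intervalDirectSum K S hS).map h).hom v)).Subsingleton := by
  have hmem {j : {i // t ∈ S i}} (hj : ((intervalDirectSum K S hS).map h).hom v j ≠ 0) :
      s ∈ S j.1 := by
    by_contra hs
    exact hj (by rw [intervalDirectSum_map_apply, dif_neg hs])
  intro j hj j' hj'
  have hjj' := Subsingleton.elim (α := {i // s ∈ S i}) ⟨j.1, hmem hj⟩ ⟨j'.1, hmem hj'⟩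
  exact Subtype.ext (Subtype.mk.inj hjj')

end IntervalDirectSum

lemma IsUpperSet.isIntervalSet {P : Type} [Preorder P] [IsDirected P (· ≤ ·)] {S : Set P}
    (hS : IsUpperSet S) : IsIntervalSet S := by
  refine ⟨fun _ _ _ hps _ hp _ => hS hps hp, fun p hp q hq => ?_⟩
  obtain ⟨r, hpr, hqr⟩ := directed_of (· ≤ ·) p q
  have hr := hS hpr hp
  exact .tail (.single ⟨hp, hr, .inl hpr⟩) ⟨hr, hq, .inr hqr⟩

theorem InDec.exists_ne_span_rho_eq {P : Type} [Preorder P] {M : PersistenceModule K P}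
    {𝒮 : Set (Set P)} (hM : InDec K M 𝒮) {κ : Type} [Fintype κ] {t : P} {p : κ → P}
    (hp : ∀ i, p i ≤ t) (hrank : ∀ i, Module.finrank K (M.obj (p i)) ≤ 1)
    (hcard : Module.finrank K (M.obj t) < Fintype.card κ) (x : ∀ i, M.obj (p i))
    (hx : ∀ i, rho K M (hp i) (x i) ≠ 0) :
    ∃ i j, i ≠ j ∧ K ∙ rho K M (hp i) (x i) = K ∙ rho K M (hp j) (x j) := by
  obtain ⟨ι, S, hS, -, hfin, ⟨φ⟩⟩ := hM
  have (q : P) : Fintype {i // q ∈ S i} := (hfin q).fintype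
  have hrank_eq (q : P) : Module.finrank K (M.obj q) = Fintype.card {i // q ∈ S i} :=
    (φ.app q).toLinearEquiv.finrank_eq.trans (Module.finrank_fintype_fun_eq_card K)
  have (i : κ) : Subsingleton {j // p i ∈ S j} :=
    Fintype.card_le_one_iff_subsingleton.1 ((hrank_eq _).symm.trans_le (hrank i))
  let e : M.obj t ≃ₗ[K] ({i // t ∈ S i} → K) := (φ.app t).toLinearEquiv
  have hnat (i : κ) : e (rho K M (hp i) (x i)) =
      ((intervalDirectSum K S hS).map (homOfLE (hp i))).hom (φ.hom.app (p i) (x i)) :=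
    congrArg (fun f => f.hom (x i)) (φ.hom.naturality (homOfLE (hp i)))
  have hline (i : κ) : ∃ j, K ∙ e (rho K M (hp i) (x i)) = K ∙ Pi.single j 1 := by
    refine exists_span_singleton_eq_span_single K
      ((map_ne_zero_iff e e.injective).2 (hx i)) ?_
    rw [hnat]
    exact support_intervalDirectSum_map_subsingleton K S hS _ _
  choose σ hσ using hline
  obtain ⟨i, j, hij, hσij⟩ := Fintype.exists_ne_map_eq_of_card_lt σ (by rwa [← hrank_eq])
  refine ⟨i, j, hij, Submodule.map_injective_of_injective e.injective ?_⟩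
  rw [Submodule.map_span, Submodule.map_span, Set.image_singleton, Set.image_singleton]
  exact (hσ i).trans (hσij ▸ (hσ j).symm)

section BasisDecomposition

variable {V : Type} [AddCommGroup V] [Module K V] {ι : Type} (b : Module.Basis ι K V)

noncomputable def Module.Basis.restrictOfLeSpan (W : Submodule K V)
    (hW : W ≤ Submodule.span K (b '' {l | b l ∈ W})) :
    Module.Basis {l // b l ∈ W} K W :=
  have hspan : Submodule.span K (Set.range fun l : {l // b l ∈ W} => b l) = W := by
    refine le_antisymm (Submodule.span_le.2 (Set.range_subset_iff.2 fun l => l.2)) ?_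
    rwa [Set.range_comp' b Subtype.val, Subtype.range_coe_subtype]
  (Module.Basis.span (b.linearIndependent.comp _ Subtype.val_injective)).map
    (LinearEquiv.ofEq _ _ hspan)

lemma Module.Basis.restrictOfLeSpan_repr (W : Submodule K V)
    (hW : W ≤ Submodule.span K (b '' {l | b l ∈ W})) (w : W) (l : {l // b l ∈ W}) :
    (b.restrictOfLeSpan K W hW).repr w l = b.repr w l := by
  refine (b.restrictOfLeSpan K W hW).repr_apply_eq (fun w l => b.repr (w : V) l)
    (fun _ _ => by ext; simp only [Submodule.coe_add, map_add, Finsupp.coe_add, Pi.add_apply])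
    (fun _ _ => by ext; simp only [SetLike.val_smul, map_smul, Finsupp.coe_smul, Pi.smul_apply])
    (fun l => ?_) w l
  ext l'
  simp [Module.Basis.restrictOfLeSpan, Finsupp.single_apply, Subtype.ext_iff]

lemma inDec_submoduleFunctor_of_basis [Finite ι] {P : Type} [Preorder P]
    (W : P → Submodule K V) (hW : Monotone W)
    (hspan : ∀ t, W t ≤ Submodule.span K (b '' {l | b l ∈ W t}))
    (𝒮 : Set (Set P)) (h𝒮 : ∀ l, {t | b l ∈ W t} ∈ 𝒮) :
    InDec K (submoduleFunctor K W hW) 𝒮 := by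
  refine ⟨ι, fun l => {t | b l ∈ W t}, fun l _ _ _ hps _ hp _ => hW hps hp, h𝒮,
    fun _ => Set.toFinite _, ⟨NatIso.ofComponents
      (fun t => (b.restrictOfLeSpan K (W t) (hspan t)).equivFun.toModuleIso) ?_⟩⟩
  intro s t h
  refine ModuleCat.hom_ext (LinearMap.ext fun w => funext fun l => ?_)
  simp only [ModuleCat.hom_comp, LinearMap.comp_apply]
  erw [intervalDirectSum_map_apply]
  change (b.restrictOfLeSpan K (W t) _).equivFun (Submodule.inclusion (hW (leOfHom h)) w) l = _
  rw [Module.Basis.equivFun_apply, Module.Basis.restrictOfLeSpan_repr]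
  split_ifs with hs
  · exact (b.restrictOfLeSpan_repr K (W s) (hspan s) w ⟨l, hs⟩).symm
  · exact Finsupp.notMem_support_iff.1 fun hl => hs (b.mem_span_image.1 (hspan s w.2) hl)

end BasisDecomposition

section AntidiagonalGenerators

def antidiagGen (m : ℕ) (i : Fin (m + 1)) : Fin m → K :=
  if h : i.val < m then Pi.single (⟨i.val, h⟩ : Fin m) (1 : K) else fun _ => 1

lemma antidiagGen_apply (m : ℕ) (i : Fin (m + 1)) (j : Fin m) :
    antidiagGen K m i j =
      (if i = j.castSucc then 1 else 0) + (if i = Fin.last m then (1 : K) else 0) := by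
  induction i using Fin.lastCases with
  | last => simp [antidiagGen, Fin.ext_iff, j.isLt.ne']
  | cast i =>
    simp [antidiagGen, Pi.single_apply, Fin.ext_iff, eq_comm, (Fin.castSucc_lt_last i).ne]

lemma sum_smul_antidiagGen_apply (m : ℕ) (c : Fin (m + 1) → K) (j : Fin m) :
    (∑ i, c i • antidiagGen K m i) j = c j.castSucc + c (Fin.last m) := by
  simp [Finset.sum_apply, antidiagGen_apply, mul_add, Finset.sum_add_distrib]

lemma linearIndepOn_antidiagGen (m : ℕ) {R : Set (Fin (m + 1))} {i₀ : Fin (m + 1)}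
    (hi₀ : i₀ ∉ R) : LinearIndepOn K (antidiagGen K m) R := by
  rw [linearIndepOn_iff]
  intro c hc hsum
  replace hsum : ∑ i, c i • antidiagGen K m i = 0 := by
    rwa [Finsupp.linearCombination_apply, Finsupp.sum_fintype _ _ (by simp)] at hsum
  have hcoord (j : Fin m) : c j.castSucc = - c (Fin.last m) := by
    have := sum_smul_antidiagGen_apply K m c j
    rw [hsum, Pi.zero_apply] at this
    linear_combination -this
  have hc₀ : c i₀ = 0 := Finsupp.notMem_support_iff.1 fun h => hi₀ (hc h)
  have hlast : c (Fin.last m) = 0 := by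
    induction i₀ using Fin.lastCases with
    | last => exact hc₀
    | cast j => simpa [hc₀] using hcoord j
  ext i
  induction i using Fin.lastCases with
  | last => exact hlast
  | cast j => simp [hcoord, hlast]

lemma antidiagGen_ne_zero {m : ℕ} (hm : 0 < m) (i : Fin (m + 1)) :
    antidiagGen K m i ≠ 0 := by
  induction i using Fin.lastCases with
  | last => exact fun h => by simpa [antidiagGen] using congrFun h ⟨0, hm⟩
  | cast j => exact fun h => by simpa [antidiagGen_apply] using congrFun h j

lemma antidiagGen_smul_ne {m : ℕ} (hm : 2 ≤ m) {i j : Fin (m + 1)} (hij : i ≠ j) (c : K) :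
    c • antidiagGen K m i ≠ antidiagGen K m j := by
  obtain ⟨i₀, -, hi₀⟩ : ∃ i₀ ∈ Finset.univ, i₀ ∉ ({i, j} : Finset _) :=
    Finset.exists_mem_notMem_of_card_lt_card
      (Finset.card_le_two.trans_lt (by rw [Finset.card_univ, Fintype.card_fin]; omega))
  have hpair := (LinearIndepOn.pair_iff _ hij).1
    (linearIndepOn_antidiagGen K m (R := {i, j}) (by simpa using hi₀)) c (-1)
  intro h
  simp [h] at hpair

end AntidiagonalGenerators

lemma exists_forall_not_isGreatest {X : Type} [Preorder X] {n : ℕ} (f : Fin (n + 1) → X)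
    {X' : Set X} (hX' : Cardinal.mk X' ≤ n) :
    ∃ a, ∀ x ∈ X', ¬ IsGreatest {i | f i ≤ x} a := by
  by_contra! h
  choose x hx hgreatest using h
  have hinj : Function.Injective fun a => (⟨x a, hx a⟩ : X') := fun a a' haa' =>
    (hgreatest a).unique (by
      rw [show x a = x a' from congrArg Subtype.val haa']
      exact hgreatest a')
  have := (Cardinal.mk_le_of_injective hinj).trans hX'
  simp at this

section KanExtension

lemma Zsub_eq_span_of_add_eq {m : ℕ} {p : Fin (m + 1) × Fin (m + 1)}
    (h : p.1.val + p.2.val = m) : Zsub K m p = K ∙ antidiagGen K m p.1 := by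
  unfold Zsub antidiagGen
  rw [if_neg (by omega), if_pos h]
  split_ifs <;> rfl

lemma Zsub_eq_top_of_lt_add {m : ℕ} {p : Fin (m + 1) × Fin (m + 1)}
    (h : m < p.1.val + p.2.val) : Zsub K m p = ⊤ := by
  unfold Zsub
  rw [if_neg (by omega), if_neg (by omega)]

lemma Zsub_trichotomy (m : ℕ) (p : Fin (m + 1) × Fin (m + 1)) :
    Zsub K m p = ⊥ ∨ Zsub K m p = K ∙ antidiagGen K m p.1 ∨ Zsub K m p = ⊤ := by
  rcases lt_trichotomy (p.1.val + p.2.val) m with h | h | h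
  · exact .inl (by unfold Zsub; rw [if_pos h])
  · exact .inr (.inl (Zsub_eq_span_of_add_eq K h))
  · exact .inr (.inr (Zsub_eq_top_of_lt_add K h))

variable {X Y : Type} [LinearOrder X] [LinearOrder Y] {m : ℕ}
  (f : Fin (m + 1) → X) (g : Fin (m + 1) → Y)

lemma kanSub_eq_Zsub {t : X × Y} {a b : Fin (m + 1)} (ha : IsGreatest {i | f i ≤ t.1} a)
    (hb : IsGreatest {j | g j ≤ t.2} b) : kanSub K m f g t = Zsub K m (a, b) :=
  le_antisymm (iSup₂_le fun _ hu => Zsub_monotone K m ⟨ha.2 hu.1, hb.2 hu.2⟩)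
    (le_iSup₂_of_le (a, b) ⟨ha.1, hb.1⟩ le_rfl)

lemma kanSub_eq_bot_or_eq_Zsub (t : X × Y) :
    kanSub K m f g t = ⊥ ∨
      ∃ a b, IsGreatest {i | f i ≤ t.1} a ∧ kanSub K m f g t = Zsub K m (a, b) := by
  by_cases hne : {i | f i ≤ t.1}.Nonempty ∧ {j | g j ≤ t.2}.Nonempty
  · obtain ⟨a, ha⟩ := (OrderTop.bddAbove _).exists_isGreatest_of_nonempty hne.1
    obtain ⟨b, hb⟩ := (OrderTop.bddAbove _).exists_isGreatest_of_nonempty hne.2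
    exact .inr ⟨a, b, ha, kanSub_eq_Zsub K f g ha hb⟩
  · exact .inl (eq_bot_iff.2 (iSup₂_le fun u hu =>
      absurd ⟨⟨u.1, hu.1⟩, ⟨u.2, hu.2⟩⟩ hne))

variable {f g}

lemma kanSub_apply_of_strictMono (hf : StrictMono f) (hg : StrictMono g) (a b : Fin (m + 1)) :
    kanSub K m f g (f a, g b) = Zsub K m (a, b) :=
  kanSub_eq_Zsub K f g ⟨le_rfl, fun _ => hf.le_iff_le.1⟩ ⟨le_rfl, fun _ => hg.le_iff_le.1⟩

end KanExtension

theorem not_inDec_kanModule {X Y : Type} [LinearOrder X] [LinearOrder Y] {m : ℕ} (hm : 2 ≤ m)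
    {f : Fin (m + 1) → X} {g : Fin (m + 1) → Y} (hf : StrictMono f) (hg : StrictMono g)
    (𝒮 : Set (Set (X × Y))) : ¬ InDec K (kanModule K m f g) 𝒮 := by
  intro hM
  let T : X × Y := (f (Fin.last m), g (Fin.last m))
  let p (i : Fin (m + 1)) : X × Y := (f i, g i.rev)
  have hpT (i : Fin (m + 1)) : p i ≤ T := ⟨hf.monotone i.le_last, hg.monotone i.rev.le_last⟩
  have hline (i : Fin (m + 1)) : kanSub K m f g (p i) = K ∙ antidiagGen K m i :=
    (kanSub_apply_of_strictMono K hf hg _ _).trans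
      (Zsub_eq_span_of_add_eq K (by dsimp only; rw [Fin.val_rev]; omega))
  have htop : kanSub K m f g T = ⊤ :=
    (kanSub_apply_of_strictMono K hf hg _ _).trans
      (Zsub_eq_top_of_lt_add K (by dsimp only; rw [Fin.val_last]; omega))
  let w (i : Fin (m + 1)) : kanSub K m f g (p i) :=
    ⟨antidiagGen K m i, hline i ▸ Submodule.mem_span_singleton_self _⟩
  have hrank (i : Fin (m + 1)) : Module.finrank K (kanSub K m f g (p i)) ≤ 1 :=
    hline i ▸ finrank_span_le_card _
  have hcard : Module.finrank K (kanSub K m f g T) < Fintype.card (Fin (m + 1)) := by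
    rw [htop, finrank_top, Module.finrank_fin_fun, Fintype.card_fin]
    omega
  obtain ⟨i, j, hij, hspan⟩ := hM.exists_ne_span_rho_eq K hpT hrank hcard w
    fun i h => antidiagGen_ne_zero K (by omega) i (congrArg Subtype.val h)
  obtain ⟨c, hc⟩ := Submodule.span_singleton_eq_span_singleton.1 hspan
  exact antidiagGen_smul_ne K hm hij c (congrArg Subtype.val hc)

theorem inDec_restrictMod_kanModule {X Y : Type} [LinearOrder X] [LinearOrder Y] {m : ℕ}
    (f : Fin (m + 1) → X) (g : Fin (m + 1) → Y) {X' : Set X} (Y' : Set Y)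
    (hX' : Cardinal.mk X' ≤ m) :
    InDec K (restrictMod K (kanModule K m f g) (X' ×ˢ Y'))
      (restrictClass {S : Set (X × Y) | IsIntervalSet S} (X' ×ˢ Y')) := by
  obtain ⟨i₀, hi₀⟩ := exists_forall_not_isGreatest f hX'
  let R : Set (Fin (m + 1)) := {a | ∃ x ∈ X', IsGreatest {i | f i ≤ x} a}
  have hli := (linearIndepOn_antidiagGen K m (R := R) (i₀ := i₀)
    fun ⟨x, hx, h⟩ => hi₀ x hx h).id_image
  let b := Module.Basis.extend hli
  have : Finite (hli.extend (Set.subset_univ _)) := Module.Finite.finite_basis b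
  have hb (a : Fin (m + 1)) (ha : a ∈ R) : ∃ l, b l = antidiagGen K m a :=
    ⟨⟨_, hli.subset_extend _ ⟨a, ha, rfl⟩⟩, Module.Basis.extend_apply_self hli _⟩
  refine inDec_submoduleFunctor_of_basis K b (fun t : ↥(X' ×ˢ Y') => kanSub K m f g t.1)
    (fun _ _ h => kanSub_monotone K m f g h) ?_ _
    fun l => ⟨{t | b l ∈ kanSub K m f g t},
      IsUpperSet.isIntervalSet fun _ _ h hl => kanSub_monotone K m f g h hl, rfl⟩
  rintro ⟨t, ht⟩
  rcases kanSub_eq_bot_or_eq_Zsub K f g t with h | ⟨a, a', ha, h⟩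
  · simp [h]
  rw [h]
  rcases Zsub_trichotomy K m (a, a') with h' | h' | h'
  · simp [h']
  · obtain ⟨l, hl⟩ := hb a ⟨t.1, ht.1, ha⟩
    rw [h', ← hl]
    exact Submodule.span_mono (Set.singleton_subset_iff.2
      ⟨l, Submodule.mem_span_singleton_self _, rfl⟩)
  · simp [h', b.span_eq]

theorem kanModule_not_interval_decomposable_but_locally_decomposable_general
    (K : Type) [Field K] (X Y : Type) [LinearOrder X] [LinearOrder Y]
    (m : ℕ) (hm : 2 ≤ m)
    (f : Fin (m + 1) → X) (g : Fin (m + 1) → Y)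
    (hf : StrictMono f) (hg : StrictMono g) :
    ¬ InDec K (kanModule K m f g) {S : Set (X × Y) | IsIntervalSet S} ∧
    ∀ (X' : Set X) (Y' : Set Y), Cardinal.mk X' ≤ m → Cardinal.mk Y' ≤ m →
      InDec K (restrictMod K (kanModule K m f g) (X' ×ˢ Y'))
        (restrictClass {S : Set (X × Y) | IsIntervalSet S} (X' ×ˢ Y')) :=
  ⟨not_inDec_kanModule K hm hf hg _, fun _ Y' hX' _ => inDec_restrictMod_kanModule K f g Y' hX'⟩

/-- The left Kan extension of `Z_m` along a product poset injection is not
interval-decomposable, although all its restrictions to product subsets of size at most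
`m × m` are. -/
theorem kanModule_not_interval_decomposable_but_locally_decomposable
    (K : Type) [Field K] (X Y : Type) [LinearOrder X] [LinearOrder Y]
    (hX : 3 ≤ Cardinal.mk X) (hY : 3 ≤ Cardinal.mk Y)
    (m : ℕ) (hm : 2 ≤ m)
    (hmX : (m : Cardinal) < Cardinal.mk X) (hmY : (m : Cardinal) < Cardinal.mk Y)
    (f : Fin (m + 1) → X) (g : Fin (m + 1) → Y)
    (hf : StrictMono f) (hg : StrictMono g) :
    ¬ InDec K (kanModule K m f g) {S : Set (X × Y) | IsIntervalSet S} ∧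
    ∀ (X' : Set X) (Y' : Set Y), Cardinal.mk X' ≤ m → Cardinal.mk Y' ≤ m →
      InDec K (restrictMod K (kanModule K m f g) (X' ×ˢ Y'))
        (restrictClass {S : Set (X × Y) | IsIntervalSet S} (X' ×ˢ Y')) :=
  kanModule_not_interval_decomposable_but_locally_decomposable_general K X Y m hm f g hf hg
end

section
/- Let M be a pointwise finite-dimensional weakly exact persistence module over X×Y, and let R and R' be rectangles of X×Y. Then V⁺_R(k_{R'}) equals the interval module k_{R'∩R⁺} if R' σ R and is the zero module otherwise; and V⁻_R(k_{R'}) equals k_{R'∩R⁺} if R' σ̊ R and is the zero module otherwise. (Here k_{R'} is itself pfd and weakly exact, so its functorial filtration is defined.) -/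
open CategoryTheory

attribute [local instance 10000] Preorder.smallCategory

attribute [local instance] Classical.propDecidable

variable (K : Type) [Field K]

/-! ## Cuts, rectangles via cuts, and the functorial filtration -/

/-- A cut of a totally ordered set: a partition into a lower and an upper part. -/
structure Cut (X : Type) [LinearOrder X] where
  lower : Set X
  upper : Set X
  union_eq : lower ∪ upper = Set.univ
  lt : ∀ x ∈ lower, ∀ y ∈ upper, x < y

theorem Cut.mem_upper_of_le {X : Type} [LinearOrder X] (c : Cut X) {a b : X}
    (ha : a ∈ c.upper) (h : a ≤ b) : b ∈ c.upper := by
  have hb : b ∈ c.lower ∪ c.upper := by rw [c.union_eq]; trivial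
  rcases hb with hb | hb
  · exact absurd h (not_le.mpr (c.lt b hb a ha))
  · exact hb

theorem Cut.mem_lower_of_le {X : Type} [LinearOrder X] (c : Cut X) {a b : X}
    (hb : b ∈ c.lower) (h : a ≤ b) : a ∈ c.lower := by
  have hb' : a ∈ c.lower ∪ c.upper := by rw [c.union_eq]; trivial
  rcases hb' with hb' | hb'
  · exact hb'
  · exact absurd h (not_le.mpr (c.lt b hb a hb'))

/-- The rectangle `(l⁺ ∩ r⁻) × (b⁺ ∩ t⁻)` associated to four cuts. -/
def rectOf {X Y : Type} [LinearOrder X] [LinearOrder Y]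
    (l r : Cut X) (b t : Cut Y) : Set (X × Y) :=
  (l.upper ∩ r.lower) ×ˢ (b.upper ∩ t.lower)

theorem isConvex_rectOf {X Y : Type} [LinearOrder X] [LinearOrder Y]
    (l r : Cut X) (b t : Cut Y) : IsConvexSet (rectOf l r b t) := by
  rintro p s q hps hsq ⟨⟨hp1, hp2⟩, hp3, hp4⟩ ⟨⟨hq1, hq2⟩, hq3, hq4⟩
  exact ⟨⟨l.mem_upper_of_le hp1 hps.1, r.mem_lower_of_le hq2 hsq.1⟩,
    b.mem_upper_of_le hp3 hps.2, t.mem_lower_of_le hq4 hsq.2⟩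

/-- The upset `R⁺` of a subset of a poset. -/
def upsetOf {P : Type} [Preorder P] (R : Set P) : Set P := {u | ∃ s ∈ R, s ≤ u}

theorem isConvex_upsetOf {P : Type} [Preorder P] (R : Set P) : IsConvexSet (upsetOf R) := by
  rintro p s q hps _ ⟨w, hw, hwp⟩ _
  exact ⟨w, hw, hwp.trans hps⟩

theorem IsConvexSet.inter {P : Type} [Preorder P] {A B : Set P}
    (hA : IsConvexSet A) (hB : IsConvexSet B) : IsConvexSet (A ∩ B) := by
  rintro p s q hps hsq ⟨hpA, hpB⟩ ⟨hqA, hqB⟩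
  exact ⟨hA hps hsq hpA hqA, hB hps hsq hpB hqB⟩

variable {X Y : Type} [LinearOrder X] [LinearOrder Y]

/-- Horizontal image space `Im⁺_{l,u}`. -/
noncomputable def ImPlusH (M : PersistenceModule K (X × Y)) (l : Cut X) (u : X × Y) :
    Submodule K (M.obj u) :=
  ⨅ (x : X) (h : x ∈ l.upper ∧ x ≤ u.1),
    LinearMap.range (rho K M (show (x, u.2) ≤ u from ⟨h.2, le_rfl⟩))

/-- Horizontal image space `Im⁻_{l,u}`. -/
noncomputable def ImMinusH (M : PersistenceModule K (X × Y)) (l : Cut X) (u : X × Y) :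
    Submodule K (M.obj u) :=
  ⨆ (x : X) (h : x ∈ l.lower ∧ x ≤ u.1),
    LinearMap.range (rho K M (show (x, u.2) ≤ u from ⟨h.2, le_rfl⟩))

/-- Horizontal kernel space `Ker⁺_{r,u}`. -/
noncomputable def KerPlusH (M : PersistenceModule K (X × Y)) (r : Cut X) (u : X × Y) :
    Submodule K (M.obj u) :=
  ⨅ (x : X) (h : x ∈ r.upper ∧ u.1 ≤ x),
    LinearMap.ker (rho K M (show u ≤ (x, u.2) from ⟨h.2, le_rfl⟩))

/-- Horizontal kernel space `Ker⁻_{r,u}`. -/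
noncomputable def KerMinusH (M : PersistenceModule K (X × Y)) (r : Cut X) (u : X × Y) :
    Submodule K (M.obj u) :=
  ⨆ (x : X) (h : x ∈ r.lower ∧ u.1 ≤ x),
    LinearMap.ker (rho K M (show u ≤ (x, u.2) from ⟨h.2, le_rfl⟩))

/-- Vertical image space `Im⁺_{b,u}`. -/
noncomputable def ImPlusV (M : PersistenceModule K (X × Y)) (b : Cut Y) (u : X × Y) :
    Submodule K (M.obj u) :=
  ⨅ (y : Y) (h : y ∈ b.upper ∧ y ≤ u.2),
    LinearMap.range (rho K M (show (u.1, y) ≤ u from ⟨le_rfl, h.2⟩))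

/-- Vertical image space `Im⁻_{b,u}`. -/
noncomputable def ImMinusV (M : PersistenceModule K (X × Y)) (b : Cut Y) (u : X × Y) :
    Submodule K (M.obj u) :=
  ⨆ (y : Y) (h : y ∈ b.lower ∧ y ≤ u.2),
    LinearMap.range (rho K M (show (u.1, y) ≤ u from ⟨le_rfl, h.2⟩))

/-- Vertical kernel space `Ker⁺_{t,u}`. -/
noncomputable def KerPlusV (M : PersistenceModule K (X × Y)) (t : Cut Y) (u : X × Y) :
    Submodule K (M.obj u) :=
  ⨅ (y : Y) (h : y ∈ t.upper ∧ u.2 ≤ y),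
    LinearMap.ker (rho K M (show u ≤ (u.1, y) from ⟨le_rfl, h.2⟩))

/-- Vertical kernel space `Ker⁻_{t,u}`. -/
noncomputable def KerMinusV (M : PersistenceModule K (X × Y)) (t : Cut Y) (u : X × Y) :
    Submodule K (M.obj u) :=
  ⨆ (y : Y) (h : y ∈ t.lower ∧ u.2 ≤ y),
    LinearMap.ker (rho K M (show u ≤ (u.1, y) from ⟨le_rfl, h.2⟩))

/-- `Im⁺_{R,u}`. -/
noncomputable def ImPlusR (M : PersistenceModule K (X × Y)) (l : Cut X) (b : Cut Y)
    (u : X × Y) : Submodule K (M.obj u) :=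
  ImPlusH K M l u ⊓ ImPlusV K M b u

/-- `Im⁻_{R,u}`. -/
noncomputable def ImMinusR (M : PersistenceModule K (X × Y)) (l : Cut X) (b : Cut Y)
    (u : X × Y) : Submodule K (M.obj u) :=
  (ImMinusH K M l u ⊔ ImMinusV K M b u) ⊓ ImPlusR K M l b u

/-- `Ker⁺_{R,u}`. -/
noncomputable def KerPlusR (M : PersistenceModule K (X × Y)) (r : Cut X) (t : Cut Y)
    (u : X × Y) : Submodule K (M.obj u) :=
  (KerPlusH K M r u ⊔ KerMinusV K M t u) ⊓ (KerMinusH K M r u ⊔ KerPlusV K M t u)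

/-- `Ker⁻_{R,u}`. -/
noncomputable def KerMinusR (M : PersistenceModule K (X × Y)) (r : Cut X) (t : Cut Y)
    (u : X × Y) : Submodule K (M.obj u) :=
  KerMinusH K M r u ⊔ KerMinusV K M t u

/-- The pointwise functorial filtration `V⁺_{R,u}(M)` (meaningful for `u ∈ R`). -/
noncomputable def VplusAt (M : PersistenceModule K (X × Y)) (l r : Cut X) (b t : Cut Y)
    (u : X × Y) : Submodule K (M.obj u) :=
  ImPlusR K M l b u ⊓ KerPlusR K M r t u

/-- The pointwise functorial filtration `V⁻_{R,u}(M)` (meaningful for `u ∈ R`). -/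
noncomputable def VminusAt (M : PersistenceModule K (X × Y)) (l r : Cut X) (b t : Cut Y)
    (u : X × Y) : Submodule K (M.obj u) :=
  ImPlusR K M l b u ⊓ KerMinusR K M r t u ⊔ ImMinusR K M l b u ⊓ KerPlusR K M r t u

/-- The extension of `V⁺_R(M)` to a family of subspaces over all of `X × Y`
(equal to `⋃_{s ∈ R, s ≤ u} ρ_s^u(V⁺_{R,s})` on the upset of `R` and `0` elsewhere). -/
noncomputable def VplusSub (M : PersistenceModule K (X × Y)) (l r : Cut X) (b t : Cut Y)
    (u : X × Y) : Submodule K (M.obj u) :=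
  ⨆ (s : X × Y) (h : s ∈ rectOf l r b t ∧ s ≤ u),
    Submodule.map (rho K M h.2) (VplusAt K M l r b t s)

/-- The extension of `V⁻_R(M)` to a family of subspaces over all of `X × Y`. -/
noncomputable def VminusSub (M : PersistenceModule K (X × Y)) (l r : Cut X) (b t : Cut Y)
    (u : X × Y) : Submodule K (M.obj u) :=
  ⨆ (s : X × Y) (h : s ∈ rectOf l r b t ∧ s ≤ u),
    Submodule.map (rho K M h.2) (VminusAt K M l r b t s)

theorem rho_comp {P : Type} [Preorder P] (M : PersistenceModule K P) {p q r : P}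
    (h1 : p ≤ q) (h2 : q ≤ r) :
    (rho K M h2).comp (rho K M h1) = rho K M (h1.trans h2) := by
  rw [rho, rho, rho, ← homOfLE_comp h1 h2, M.map_comp]
  rfl

/-- The subfunctor of a persistence module determined by a compatible family of subspaces. -/
noncomputable def subfunctor {P : Type} [Preorder P] (M : PersistenceModule K P)
    (S : ∀ p, Submodule K (M.obj p))
    (hS : ∀ (p q : P) (h : p ≤ q), (S p).map (rho K M h) ≤ S q) :
    PersistenceModule K P where
  obj p := ModuleCat.of K ↥(S p)
  map {p q} f :=
    ModuleCat.ofHom ((rho K M (leOfHom f)).restrict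
      (p := S p) (q := S q) (fun x hx => hS p q (leOfHom f) ⟨x, hx, rfl⟩))
  map_id p := by
    refine ModuleCat.hom_ext (LinearMap.ext fun x => Subtype.ext ?_)
    show (M.map (𝟙 p)).hom x.1 = x.1
    rw [M.map_id]
    rfl
  map_comp {p q r} f g := by
    refine ModuleCat.hom_ext (LinearMap.ext fun x => Subtype.ext ?_)
    show (M.map (homOfLE ((leOfHom f).trans (leOfHom g)))).hom x.1 =
      (M.map (homOfLE (leOfHom g))).hom ((M.map (homOfLE (leOfHom f))).hom x.1)
    rw [← homOfLE_comp (leOfHom f) (leOfHom g), M.map_comp]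
    rfl

theorem vplusSub_mapsTo (M : PersistenceModule K (X × Y)) (l r : Cut X) (b t : Cut Y) :
    ∀ (p q : X × Y) (h : p ≤ q),
      Submodule.map (rho K M h) (VplusSub K M l r b t p) ≤ VplusSub K M l r b t q := by
  intro p q h
  rw [VplusSub, Submodule.map_iSup]
  refine iSup_le fun s => ?_
  rw [Submodule.map_iSup]
  refine iSup_le fun hs => ?_
  rw [← Submodule.map_comp, rho_comp K M hs.2 h]
  exact le_iSup_of_le s (le_iSup_of_le ⟨hs.1, hs.2.trans h⟩ le_rfl)

theorem vminusSub_mapsTo (M : PersistenceModule K (X × Y)) (l r : Cut X) (b t : Cut Y) :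
    ∀ (p q : X × Y) (h : p ≤ q),
      Submodule.map (rho K M h) (VminusSub K M l r b t p) ≤ VminusSub K M l r b t q := by
  intro p q h
  rw [VminusSub, Submodule.map_iSup]
  refine iSup_le fun s => ?_
  rw [Submodule.map_iSup]
  refine iSup_le fun hs => ?_
  rw [← Submodule.map_comp, rho_comp K M hs.2 h]
  exact le_iSup_of_le s (le_iSup_of_le ⟨hs.1, hs.2.trans h⟩ le_rfl)

/-- The submodule `V⁺_R(M)` of `M`, as a persistence module. -/
noncomputable def VplusMod (M : PersistenceModule K (X × Y)) (l r : Cut X) (b t : Cut Y) :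
    PersistenceModule K (X × Y) :=
  subfunctor K M (VplusSub K M l r b t) (vplusSub_mapsTo K M l r b t)

/-- The submodule `V⁻_R(M)` of `M`, as a persistence module. -/
noncomputable def VminusMod (M : PersistenceModule K (X × Y)) (l r : Cut X) (b t : Cut Y) :
    PersistenceModule K (X × Y) :=
  subfunctor K M (VminusSub K M l r b t) (vminusSub_mapsTo K M l r b t)

/-- The relation `R' σ R` on rectangles, expressed on cut decompositions. -/
def SigmaRel (l' r' : Cut X) (b' t' : Cut Y) (l r : Cut X) (b t : Cut Y) : Prop :=
  l'.lower ⊆ l.lower ∧ b'.lower ⊆ b.lower ∧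
    (r'.lower ⊂ r.lower ∨ t'.lower ⊂ t.lower ∨
      (r'.lower ⊆ r.lower ∧ t'.lower ⊆ t.lower))

/-- The relation `R' σ̊ R`: `R' σ R` and `R' ≠ R`. -/
def SigmaRelStrict (l' r' : Cut X) (b' t' : Cut Y) (l r : Cut X) (b t : Cut Y) : Prop :=
  SigmaRel l' r' b' t' l r b t ∧ rectOf l' r' b' t' ≠ rectOf l r b t

/-- The interval (indicator) module of a single convex set. -/
noncomputable abbrev singleIntervalModule {P : Type} [Preorder P] (S : Set P)
    (hS : IsConvexSet S) : PersistenceModule K P :=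
  intervalDirectSum K (fun _ : PUnit => S) (fun _ => hS)

/-! At a point of `R'` the module `k_{R'}` is one-dimensional; a structure map between two points
of `R'` is an isomorphism, and a map into or out of a point outside `R'` vanishes. So each image
and kernel space entering `V^±_{R,u}(k_{R'})` is `0` or everything according to an inclusion
between lower parts of the cuts, and `V^±_{R,u}` itself according to a Boolean combination of
these inclusions. Since lower parts of cuts are totally ordered by inclusion, that combination is
exactly `R' σ R` (resp. `R' σ̊ R`). -/

section IteTopBot

variable {α : Type*}

theorem inf_ite_top_bot [Lattice α] [BoundedOrder α] (p q : Prop) [Decidable p] [Decidable q] :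
    ((if p then ⊤ else ⊥) ⊓ (if q then ⊤ else ⊥) : α) = if p ∧ q then ⊤ else ⊥ := by
  by_cases hp : p <;> by_cases hq : q <;> simp [hp, hq]

theorem sup_ite_top_bot [Lattice α] [BoundedOrder α] (p q : Prop) [Decidable p] [Decidable q] :
    ((if p then ⊤ else ⊥) ⊔ (if q then ⊤ else ⊥) : α) = if p ∨ q then ⊤ else ⊥ := by
  by_cases hp : p <;> by_cases hq : q <;> simp [hp, hq]

theorem iInf₂_ite_top_bot [CompleteLattice α] {ι : Type*} (p q : ι → Prop)
    [∀ i, Decidable (q i)] [Decidable (∀ i, p i → q i)] :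
    (⨅ (i) (_ : p i), if q i then ⊤ else ⊥ : α) = if ∀ i, p i → q i then ⊤ else ⊥ := by
  split_ifs with h
  · exact iInf₂_eq_top.2 fun i hi => if_pos (h i hi)
  · obtain ⟨i, hp, hq⟩ : ∃ i, p i ∧ ¬q i := by simpa using h
    exact le_bot_iff.1 (iInf₂_le_of_le i hp (if_neg hq).le)

theorem iSup₂_ite_top_bot [CompleteLattice α] {ι : Type*} (p q : ι → Prop)
    [∀ i, Decidable (q i)] [Decidable (∃ i, p i ∧ q i)] :
    (⨆ (i) (_ : p i), if q i then ⊤ else ⊥ : α) = if ∃ i, p i ∧ q i then ⊤ else ⊥ := by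
  split_ifs with h
  · obtain ⟨i, hp, hq⟩ := h
    exact top_le_iff.1 (le_iSup₂_of_le i hp (if_pos hq).ge)
  · exact iSup₂_eq_bot.2 fun i hi => if_neg fun hq => h ⟨i, hi, hq⟩

end IteTopBot

section IntervalModule

variable {K} {P : Type} [Preorder P] {S : Set P} {hS : IsConvexSet S}

theorem singleIntervalModule_obj_subsingleton {p : P} (hp : p ∉ S) :
    Subsingleton ((singleIntervalModule K S hS).obj p) :=
  have : IsEmpty {i : PUnit // p ∈ (fun _ : PUnit => S) i} := ⟨fun i => hp i.2⟩
  inferInstanceAs (Subsingleton ({i : PUnit // p ∈ (fun _ : PUnit => S) i} → K))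

theorem singleIntervalModule_submodule_eq_bot {p : P} (hp : p ∉ S)
    (N : Submodule K ((singleIntervalModule K S hS).obj p)) : N = ⊥ :=
  have := singleIntervalModule_obj_subsingleton (K := K) (hS := hS) hp
  N.eq_bot_of_subsingleton

theorem pfd_singleIntervalModule : Pfd K (singleIntervalModule K S hS) := fun p =>
  inferInstanceAs (FiniteDimensional K ({i : PUnit // p ∈ (fun _ : PUnit => S) i} → K))

theorem rho_singleIntervalModule_apply {s t : P} (h : s ≤ t)
    (v : (singleIntervalModule K S hS).obj s) (j : {i : PUnit // t ∈ (fun _ : PUnit => S) i}) :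
    rho K (singleIntervalModule K S hS) h v j = if hs : s ∈ S then v ⟨PUnit.unit, hs⟩ else 0 := by
  show ((if hs : s ∈ S then
      LinearMap.proj (⟨PUnit.unit, hs⟩ : {i : PUnit // s ∈ (fun _ : PUnit => S) i}) else 0 :
        ({i : PUnit // s ∈ (fun _ : PUnit => S) i} → K) →ₗ[K] K)) v = _
  by_cases hs : s ∈ S
  · simp only [dif_pos hs]; rfl
  · simp only [dif_neg hs]; rfl

theorem range_rho_singleIntervalModule {s t : P} (h : s ≤ t) (ht : t ∈ S) :
    LinearMap.range (rho K (singleIntervalModule K S hS) h) = if s ∈ S then ⊤ else ⊥ := by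
  by_cases hs : s ∈ S
  · rw [if_pos hs, LinearMap.range_eq_top]
    refine fun w => ⟨fun _ => w ⟨PUnit.unit, ht⟩, funext fun j => ?_⟩
    exact (rho_singleIntervalModule_apply h _ j).trans (dif_pos hs)
  · rw [if_neg hs, LinearMap.range_eq_bot]
    refine LinearMap.ext fun v => funext fun j => ?_
    exact (rho_singleIntervalModule_apply h v j).trans (dif_neg hs)

theorem ker_rho_singleIntervalModule {s t : P} (h : s ≤ t) (hs : s ∈ S) :
    LinearMap.ker (rho K (singleIntervalModule K S hS) h) = if t ∉ S then ⊤ else ⊥ := by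
  by_cases ht : t ∈ S
  · rw [if_neg (not_not.2 ht), LinearMap.ker_eq_bot']
    refine fun v hv => funext fun i => ?_
    have := congrFun hv ⟨PUnit.unit, ht⟩
    rwa [rho_singleIntervalModule_apply, dif_pos hs] at this
  · have := singleIntervalModule_obj_subsingleton (K := K) (hS := hS) ht
    rw [if_pos ht, LinearMap.ker_eq_top]
    exact Subsingleton.elim _ _

theorem iSup_map_rho_singleIntervalModule {R : Set P} {u : P}
    (F : ∀ p, Submodule K ((singleIntervalModule K S hS).obj p)) (c : Prop) [Decidable c]
    (hF : ∀ s ∈ R, s ∈ S → F s = if c then ⊤ else ⊥)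
    (hRS : c → ∀ s ∈ R, s ≤ u → u ∈ S → s ∈ S) :
    (⨆ (s : P) (h : s ∈ R ∧ s ≤ u), (F s).map (rho K (singleIntervalModule K S hS) h.2)) =
      if c ∧ u ∈ S ∩ upsetOf R then ⊤ else ⊥ := by
  by_cases hu : u ∈ S
  swap
  · exact (singleIntervalModule_submodule_eq_bot hu _).trans
      (singleIntervalModule_submodule_eq_bot hu _).symm
  split_ifs with h
  · obtain ⟨hc, -, s, hsR, hsu⟩ := h
    have hs := hRS hc s hsR hsu hu
    refine top_le_iff.1 (le_iSup₂_of_le s ⟨hsR, hsu⟩ ?_)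
    rw [hF s hsR hs, if_pos hc, Submodule.map_top, range_rho_singleIntervalModule hsu hu, if_pos hs]
  · refine iSup₂_eq_bot.2 fun s hs => ?_
    by_cases hsS : s ∈ S
    · rw [hF s hs.1 hsS, if_neg fun hc => h ⟨hc, hu, s, hs⟩, Submodule.map_bot]
    · rw [singleIntervalModule_submodule_eq_bot hsS (F s), Submodule.map_bot]

theorem weaklyExact_singleIntervalModule_prod {X Y : Type} [Preorder X] [Preorder Y]
    {I : Set X} {J : Set Y} (h : IsConvexSet (I ×ˢ J)) :
    WeaklyExact K (singleIntervalModule K (I ×ˢ J) h) := by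
  intro s t hst
  constructor
  · by_cases ht : t ∈ I ×ˢ J
    · simp only [range_rho_singleIntervalModule _ ht, inf_ite_top_bot]
      congr 1
      simp only [Set.mem_prod] at ht ⊢
      exact propext (by tauto)
    · exact (singleIntervalModule_submodule_eq_bot ht _).trans
        (singleIntervalModule_submodule_eq_bot ht _).symm
  · by_cases hs : s ∈ I ×ˢ J
    · simp only [ker_rho_singleIntervalModule _ hs, sup_ite_top_bot]
      congr 1
      simp only [Set.mem_prod] at hs ⊢
      exact propext (by tauto)
    · exact (singleIntervalModule_submodule_eq_bot hs _).trans
        (singleIntervalModule_submodule_eq_bot hs _).symm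

end IntervalModule

namespace Cut

variable {Z : Type} [LinearOrder Z] {l r l' r' : Cut Z} {a : Z}

theorem mem_upper_iff {c : Cut Z} {x : Z} : x ∈ c.upper ↔ x ∉ c.lower := by
  refine ⟨fun hu hl => (c.lt x hl x hu).false, fun hl => ?_⟩
  have hx : x ∈ c.lower ∪ c.upper := c.union_eq ▸ Set.mem_univ x
  exact hx.resolve_left hl

theorem lower_subset_total (c d : Cut Z) : c.lower ⊆ d.lower ∨ d.lower ⊆ c.lower := by
  refine or_iff_not_imp_left.2 fun h y hy => ?_
  obtain ⟨x, hxc, hxd⟩ := Set.not_subset.1 h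
  exact c.mem_lower_of_le hxc (d.lt y hy x (mem_upper_iff.2 hxd)).le

theorem forall_upper_le_mem_iff (ha : a ∈ l'.upper ∩ r'.lower) :
    (∀ x, x ∈ l.upper ∧ x ≤ a → x ∈ l'.upper ∩ r'.lower) ↔ l'.lower ⊆ l.lower := by
  refine ⟨fun h x hx => ?_, fun h x ⟨hxl, hxa⟩ => ⟨?_, r'.mem_lower_of_le ha.2 hxa⟩⟩
  · by_contra hxl
    exact mem_upper_iff.1 (h x ⟨mem_upper_iff.2 hxl, (l'.lt x hx a ha.1).le⟩).1 hx
  · exact mem_upper_iff.2 fun hx => mem_upper_iff.1 hxl (h hx)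

theorem exists_lower_le_mem_iff (hal : a ∈ l.upper) (ha : a ∈ r'.lower) :
    (∃ x, (x ∈ l.lower ∧ x ≤ a) ∧ x ∈ l'.upper ∩ r'.lower) ↔ ¬l.lower ⊆ l'.lower := by
  refine ⟨fun ⟨x, ⟨hxl, _⟩, hx', _⟩ h => mem_upper_iff.1 hx' (h hxl), fun h => ?_⟩
  obtain ⟨x, hxl, hxl'⟩ := Set.not_subset.1 h
  have hxa := (l.lt x hxl a hal).le
  exact ⟨x, ⟨hxl, hxa⟩, mem_upper_iff.2 hxl', r'.mem_lower_of_le ha hxa⟩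

theorem forall_upper_ge_not_mem_iff (har : a ∈ r.lower) (ha : a ∈ l'.upper) :
    (∀ x, x ∈ r.upper ∧ a ≤ x → x ∉ l'.upper ∩ r'.lower) ↔ r'.lower ⊆ r.lower := by
  refine ⟨fun h x hx => ?_, fun h x ⟨hxu, _⟩ ⟨_, hx⟩ => mem_upper_iff.1 hxu (h hx)⟩
  by_contra hxr
  have hax := (r.lt a har x (mem_upper_iff.2 hxr)).le
  exact h x ⟨mem_upper_iff.2 hxr, hax⟩ ⟨l'.mem_upper_of_le ha hax, hx⟩

theorem exists_lower_ge_not_mem_iff (ha : a ∈ l'.upper ∩ r'.lower) :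
    (∃ x, (x ∈ r.lower ∧ a ≤ x) ∧ x ∉ l'.upper ∩ r'.lower) ↔ ¬r.lower ⊆ r'.lower := by
  refine ⟨fun ⟨x, ⟨hxr, hax⟩, hx⟩ h => hx ⟨l'.mem_upper_of_le ha.1 hax, h hxr⟩, fun h => ?_⟩
  obtain ⟨x, hxr, hxr'⟩ := Set.not_subset.1 h
  exact ⟨x, ⟨hxr, (r'.lt a ha.2 x (mem_upper_iff.2 hxr')).le⟩, fun hx => hxr' hx.2⟩

theorem inter_subset_inter_iff (ha : a ∈ l.upper ∩ r.lower) :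
    l.upper ∩ r.lower ⊆ l'.upper ∩ r'.lower ↔ l'.lower ⊆ l.lower ∧ r.lower ⊆ r'.lower := by
  refine ⟨fun h => ⟨fun x hx => ?_, fun x hx => ?_⟩, fun ⟨hl, hr⟩ x ⟨hxl, hxr⟩ => ?_⟩
  · by_contra hxl
    have hxa := (l'.lt x hx a (h ha).1).le
    exact mem_upper_iff.1 (h ⟨mem_upper_iff.2 hxl, r.mem_lower_of_le ha.2 hxa⟩).1 hx
  · by_contra hxr
    have hax := (r'.lt a (h ha).2 x (mem_upper_iff.2 hxr)).le
    exact hxr (h ⟨l.mem_upper_of_le ha.1 hax, hx⟩).2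
  · exact ⟨mem_upper_iff.2 fun hx => mem_upper_iff.1 hxl (hl hx), hr hxr⟩

end Cut

section Rectangle

variable {l r l' r' : Cut X} {b t b' t' : Cut Y} {u : X × Y}

theorem mk_mem_rectOf_iff_left (hu : u ∈ rectOf l r b t) {x : X} :
    (x, u.2) ∈ rectOf l r b t ↔ x ∈ l.upper ∩ r.lower :=
  and_iff_left hu.2

theorem mk_mem_rectOf_iff_right (hu : u ∈ rectOf l r b t) {y : Y} :
    (u.1, y) ∈ rectOf l r b t ↔ y ∈ b.upper ∩ t.lower :=
  and_iff_right hu.1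

theorem rectOf_subset_rectOf_iff (hu : u ∈ rectOf l r b t) :
    rectOf l r b t ⊆ rectOf l' r' b' t' ↔
      (l'.lower ⊆ l.lower ∧ r.lower ⊆ r'.lower) ∧ b'.lower ⊆ b.lower ∧ t.lower ⊆ t'.lower := by
  rw [rectOf, rectOf, Set.prod_subset_prod_iff' ⟨u, hu⟩, Cut.inter_subset_inter_iff hu.1,
    Cut.inter_subset_inter_iff hu.2]

theorem mem_rectOf_of_le (hl : l'.lower ⊆ l.lower) (hb : b'.lower ⊆ b.lower) {s : X × Y}
    (hs : s ∈ rectOf l r b t) (hsu : s ≤ u) (hu : u ∈ rectOf l' r' b' t') :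
    s ∈ rectOf l' r' b' t' :=
  ⟨⟨Cut.mem_upper_iff.2 fun h => Cut.mem_upper_iff.1 hs.1.1 (hl h),
      r'.mem_lower_of_le hu.1.2 hsu.1⟩,
    Cut.mem_upper_iff.2 fun h => Cut.mem_upper_iff.1 hs.2.1 (hb h),
      t'.mem_lower_of_le hu.2.2 hsu.2⟩

end Rectangle

section Sigma

variable {l r l' r' : Cut X} {b t b' t' : Cut Y}

theorem sigmaRel_iff : SigmaRel l' r' b' t' l r b t ↔
    (l'.lower ⊆ l.lower ∧ b'.lower ⊆ b.lower) ∧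
      (r'.lower ⊆ r.lower ∨ ¬t.lower ⊆ t'.lower) ∧ (¬r.lower ⊆ r'.lower ∨ t'.lower ⊆ t.lower) := by
  have := Cut.lower_subset_total r r'
  have := Cut.lower_subset_total t t'
  simp only [SigmaRel, Set.ssubset_def]
  tauto

theorem sigmaRelStrict_iff {u : X × Y} (hu : u ∈ rectOf l r b t) (hu' : u ∈ rectOf l' r' b' t') :
    SigmaRelStrict l' r' b' t' l r b t ↔ SigmaRel l' r' b' t' l r b t ∧
      ¬(l.lower ⊆ l'.lower ∧ b.lower ⊆ b'.lower ∧ r.lower ⊆ r'.lower ∧ t.lower ⊆ t'.lower) := by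
  simp only [SigmaRelStrict, sigmaRel_iff, ne_eq, Set.Subset.antisymm_iff,
    rectOf_subset_rectOf_iff hu, rectOf_subset_rectOf_iff hu']
  tauto

end Sigma

noncomputable abbrev rectModule (l r : Cut X) (b t : Cut Y) : PersistenceModule K (X × Y) :=
  singleIntervalModule K (rectOf l r b t) (isConvex_rectOf l r b t)

section RectModule

variable {K} {l r l' r' : Cut X} {b t b' t' : Cut Y} {u : X × Y}

theorem imPlusH_rectModule (hu' : u ∈ rectOf l' r' b' t') :
    ImPlusH K (rectModule K l' r' b' t') l u = if l'.lower ⊆ l.lower then ⊤ else ⊥ := by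
  simp only [ImPlusH, range_rho_singleIntervalModule _ hu', mk_mem_rectOf_iff_left hu',
    iInf₂_ite_top_bot, Cut.forall_upper_le_mem_iff hu'.1]

theorem imPlusV_rectModule (hu' : u ∈ rectOf l' r' b' t') :
    ImPlusV K (rectModule K l' r' b' t') b u = if b'.lower ⊆ b.lower then ⊤ else ⊥ := by
  simp only [ImPlusV, range_rho_singleIntervalModule _ hu', mk_mem_rectOf_iff_right hu',
    iInf₂_ite_top_bot, Cut.forall_upper_le_mem_iff hu'.2]

theorem imMinusH_rectModule (hu : u ∈ rectOf l r b t) (hu' : u ∈ rectOf l' r' b' t') :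
    ImMinusH K (rectModule K l' r' b' t') l u = if ¬l.lower ⊆ l'.lower then ⊤ else ⊥ := by
  simp only [ImMinusH, range_rho_singleIntervalModule _ hu', mk_mem_rectOf_iff_left hu',
    iSup₂_ite_top_bot, Cut.exists_lower_le_mem_iff hu.1.1 hu'.1.2]

theorem imMinusV_rectModule (hu : u ∈ rectOf l r b t) (hu' : u ∈ rectOf l' r' b' t') :
    ImMinusV K (rectModule K l' r' b' t') b u = if ¬b.lower ⊆ b'.lower then ⊤ else ⊥ := by
  simp only [ImMinusV, range_rho_singleIntervalModule _ hu', mk_mem_rectOf_iff_right hu',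
    iSup₂_ite_top_bot, Cut.exists_lower_le_mem_iff hu.2.1 hu'.2.2]

theorem kerPlusH_rectModule (hu : u ∈ rectOf l r b t) (hu' : u ∈ rectOf l' r' b' t') :
    KerPlusH K (rectModule K l' r' b' t') r u = if r'.lower ⊆ r.lower then ⊤ else ⊥ := by
  simp only [KerPlusH, ker_rho_singleIntervalModule _ hu', mk_mem_rectOf_iff_left hu',
    iInf₂_ite_top_bot, Cut.forall_upper_ge_not_mem_iff hu.1.2 hu'.1.1]

theorem kerPlusV_rectModule (hu : u ∈ rectOf l r b t) (hu' : u ∈ rectOf l' r' b' t') :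
    KerPlusV K (rectModule K l' r' b' t') t u = if t'.lower ⊆ t.lower then ⊤ else ⊥ := by
  simp only [KerPlusV, ker_rho_singleIntervalModule _ hu', mk_mem_rectOf_iff_right hu',
    iInf₂_ite_top_bot, Cut.forall_upper_ge_not_mem_iff hu.2.2 hu'.2.1]

theorem kerMinusH_rectModule (hu' : u ∈ rectOf l' r' b' t') :
    KerMinusH K (rectModule K l' r' b' t') r u = if ¬r.lower ⊆ r'.lower then ⊤ else ⊥ := by
  simp only [KerMinusH, ker_rho_singleIntervalModule _ hu', mk_mem_rectOf_iff_left hu',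
    iSup₂_ite_top_bot, Cut.exists_lower_ge_not_mem_iff hu'.1]

theorem kerMinusV_rectModule (hu' : u ∈ rectOf l' r' b' t') :
    KerMinusV K (rectModule K l' r' b' t') t u = if ¬t.lower ⊆ t'.lower then ⊤ else ⊥ := by
  simp only [KerMinusV, ker_rho_singleIntervalModule _ hu', mk_mem_rectOf_iff_right hu',
    iSup₂_ite_top_bot, Cut.exists_lower_ge_not_mem_iff hu'.2]

theorem vplusAt_rectModule (hu : u ∈ rectOf l r b t) (hu' : u ∈ rectOf l' r' b' t') :
    VplusAt K (rectModule K l' r' b' t') l r b t u =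
      if SigmaRel l' r' b' t' l r b t then ⊤ else ⊥ := by
  simp only [VplusAt, ImPlusR, KerPlusR, imPlusH_rectModule hu', imPlusV_rectModule hu',
    kerPlusH_rectModule hu hu', kerPlusV_rectModule hu hu', kerMinusH_rectModule hu',
    kerMinusV_rectModule hu', inf_ite_top_bot, sup_ite_top_bot, sigmaRel_iff]

theorem vminusAt_rectModule (hu : u ∈ rectOf l r b t) (hu' : u ∈ rectOf l' r' b' t') :
    VminusAt K (rectModule K l' r' b' t') l r b t u =
      if SigmaRelStrict l' r' b' t' l r b t then ⊤ else ⊥ := by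
  simp only [VminusAt, ImPlusR, ImMinusR, KerPlusR, KerMinusR, imPlusH_rectModule hu',
    imPlusV_rectModule hu', imMinusH_rectModule hu hu', imMinusV_rectModule hu hu',
    kerPlusH_rectModule hu hu', kerPlusV_rectModule hu hu', kerMinusH_rectModule hu',
    kerMinusV_rectModule hu', inf_ite_top_bot, sup_ite_top_bot, sigmaRelStrict_iff hu hu',
    sigmaRel_iff]
  have := Cut.lower_subset_total r r'
  have := Cut.lower_subset_total t t'
  congr 1
  exact propext (by tauto)

theorem vplusSub_rectModule (u : X × Y) :
    VplusSub K (rectModule K l' r' b' t') l r b t u =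
      if SigmaRel l' r' b' t' l r b t ∧ u ∈ rectOf l' r' b' t' ∩ upsetOf (rectOf l r b t)
      then ⊤ else ⊥ :=
  iSup_map_rho_singleIntervalModule _ _ (fun _ hs hs' => vplusAt_rectModule hs hs')
    fun hσ _ hs hsu hu => mem_rectOf_of_le hσ.1 hσ.2.1 hs hsu hu

theorem vminusSub_rectModule (u : X × Y) :
    VminusSub K (rectModule K l' r' b' t') l r b t u =
      if SigmaRelStrict l' r' b' t' l r b t ∧ u ∈ rectOf l' r' b' t' ∩ upsetOf (rectOf l r b t)
      then ⊤ else ⊥ :=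
  iSup_map_rho_singleIntervalModule _ _ (fun _ hs hs' => vminusAt_rectModule hs hs')
    fun hσ _ hs hsu hu => mem_rectOf_of_le hσ.1.1 hσ.1.2.1 hs hsu hu

end RectModule

/-- **Statement 6.** The functorial filtration of a rectangle module `k_{R'}` associated to a
rectangle `R`: `V⁺_R(k_{R'}) = k_{R'∩R⁺}` if `R' σ R` and `0` otherwise, and
`V⁻_R(k_{R'}) = k_{R'∩R⁺}` if `R' σ̊ R` and `0` otherwise. -/
theorem filtration_of_rectangle_module
    (K : Type) [Field K] (X Y : Type) [LinearOrder X] [LinearOrder Y]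
    (l' r' : Cut X) (b' t' : Cut Y) (l r : Cut X) (b t : Cut Y)
    (M : PersistenceModule K (X × Y))
    (hMdef : M = singleIntervalModule K (rectOf l' r' b' t') (isConvex_rectOf l' r' b' t')) :
    Pfd K M ∧ WeaklyExact K M ∧
    ∀ u : X × Y,
      (SigmaRel l' r' b' t' l r b t →
        (u ∈ rectOf l' r' b' t' ∩ upsetOf (rectOf l r b t) →
          VplusSub K M l r b t u = ⊤) ∧
        (u ∉ rectOf l' r' b' t' ∩ upsetOf (rectOf l r b t) →
          VplusSub K M l r b t u = ⊥)) ∧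
      (¬ SigmaRel l' r' b' t' l r b t → VplusSub K M l r b t u = ⊥) ∧
      (SigmaRelStrict l' r' b' t' l r b t →
        (u ∈ rectOf l' r' b' t' ∩ upsetOf (rectOf l r b t) →
          VminusSub K M l r b t u = ⊤) ∧
        (u ∉ rectOf l' r' b' t' ∩ upsetOf (rectOf l r b t) →
          VminusSub K M l r b t u = ⊥)) ∧
      (¬ SigmaRelStrict l' r' b' t' l r b t → VminusSub K M l r b t u = ⊥) := by
  subst hMdef
  refine ⟨pfd_singleIntervalModule, weaklyExact_singleIntervalModule_prod _, fun u => ?_⟩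
  rw [vplusSub_rectModule, vminusSub_rectModule]
  exact ⟨fun hσ => ⟨fun hu => if_pos ⟨hσ, hu⟩, fun hu => if_neg fun h => hu h.2⟩,
    fun hσ => if_neg fun h => hσ h.1,
    fun hσ => ⟨fun hu => if_pos ⟨hσ, hu⟩, fun hu => if_neg fun h => hu h.2⟩,
    fun hσ => if_neg fun h => hσ h.1⟩
end

section
/- Let M be a pointwise finite-dimensional weakly exact persistence module over X×Y and R a rectangle of X×Y. Then the submodule V⁺_R(M) of M (with the restricted internal maps) is itself a weakly exact persistence module. -/
open CategoryTheory

attribute [local instance 10000] Preorder.smallCategory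

attribute [local instance] Classical.propDecidable

variable (K : Type) [Field K]

variable {X Y : Type} [LinearOrder X] [LinearOrder Y]

/-!
Pointwise finite dimensionality makes every infimum or supremum, over one side of a cut, of the
images or kernels of the internal maps attained (a monotone chain of subspaces stabilises), and
weak exactness merges the resulting horizontal and vertical image (kernel) into a single one.
Consequently, for `z ≤ w` in `R` there is a point `p ≤ z` with `Im⁺_{R,w} = Im ρ_p^w`, while
`Ker⁺_{R,z}` is the preimage of `Ker⁺_{R,w}` under `ρ_z^w`; so `V⁺_{R,w} = ρ_p^w(Ker⁺_{R,p})` and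
`ρ_z^w` maps `V⁺_{R,z}` onto `V⁺_{R,w}`. Hence `V⁺_R(M)_u = ρ_w^u(V⁺_{R,w})` for every `w ∈ R`
below `u`, and as `R` is closed under meets this gives the image condition.

For the kernel condition, an element of `V⁺_R(M)_s` killed by `ρ_s^t` is `ρ_p^s v` with
`v ∈ Ker⁺_{R,p} ∩ Ker ρ_p^t`. All kernels involved at `p` lie on one horizontal and one vertical
chain, and in a modular lattice the sublattice generated by two chains is distributive; this
splits `v` into a part killed horizontally and a part killed vertically.
-/

theorem exists_forall_le_eq_biInf {ι α : Type*} [LinearOrder ι] [CompleteLattice α]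
    [WellFoundedLT α] {p : ι → Prop} (hp : ∃ i, p i) {f : ∀ i, p i → α}
    (hf : ∀ i j (hi : p i) (hj : p j), i ≤ j → f i hi ≤ f j hj) :
    ∃ c, ∃ _ : p c, ∀ i (hi : p i), i ≤ c → f i hi = ⨅ j, ⨅ hj : p j, f j hj := by
  obtain ⟨i₀, hi₀⟩ := hp
  obtain ⟨_, ⟨⟨c, hc⟩, rfl⟩, hmin⟩ :=
    wellFounded_lt.has_min (Set.range fun i : Subtype p => f i i.2) ⟨_, ⟨i₀, hi₀⟩, rfl⟩
  have hstab : ∀ i (hi : p i), i ≤ c → f i hi = f c hc := fun i hi hic =>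
    (hf i c hi hc hic).eq_of_not_lt (hmin _ ⟨⟨i, hi⟩, rfl⟩)
  refine ⟨c, hc, fun i hi hic => (hstab i hi hic).trans <|
    le_antisymm (le_iInf₂ fun j hj => ?_) (iInf₂_le c hc)⟩
  rcases le_total j c with hjc | hcj
  · exact (hstab j hj hjc).ge
  · exact hf c j hc hj hcj

theorem exists_forall_ge_eq_biSup {ι α : Type*} [LinearOrder ι] [CompleteLattice α]
    [WellFoundedGT α] {p : ι → Prop} (hp : ∃ i, p i) {f : ∀ i, p i → α}
    (hf : ∀ i j (hi : p i) (hj : p j), i ≤ j → f i hi ≤ f j hj) :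
    ∃ c, ∃ _ : p c, ∀ i (hi : p i), c ≤ i → f i hi = ⨆ j, ⨆ hj : p j, f j hj :=
  exists_forall_le_eq_biInf (ι := ιᵒᵈ) (α := αᵒᵈ) hp fun i j hi hj hij =>
    hf j i hj hi hij

theorem inf_sup_le_of_chains {α : Type*} [Lattice α] [IsModularLattice α] {a a' c b b' d : α}
    (ha : a' ≤ a) (hb : b' ≤ b) (hca' : c ≤ a' ∨ a' ≤ c) (hca : c ≤ a ∨ a ≤ c)
    (hdb' : d ≤ b' ∨ b' ≤ d) (hdb : d ≤ b ∨ b ≤ d) :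
    (a ⊔ b') ⊓ (a' ⊔ b) ⊓ (c ⊔ d) ≤
      (a ⊔ b') ⊓ (a' ⊔ b) ⊓ c ⊔ (a ⊔ b') ⊓ (a' ⊔ b) ⊓ d := by
  have hk : (a ⊔ b') ⊓ (a' ⊔ b) = a' ⊔ b' ⊔ a ⊓ b := by
    rw [inf_comm (a ⊔ b'), sup_inf_assoc_of_le b (ha.trans le_sup_left), sup_comm a b',
      inf_comm b, sup_inf_assoc_of_le a hb, sup_assoc]
  set k := (a ⊔ b') ⊓ (a' ⊔ b)
  have ha'k : a' ≤ k := hk ▸ le_sup_left.trans le_sup_left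
  have hb'k : b' ≤ k := hk ▸ le_sup_right.trans le_sup_left
  have habk : a ⊓ b ≤ k := hk ▸ le_sup_right
  have hmod : ∀ {x} y, x ≤ k → k ⊓ (x ⊔ y) ≤ k ⊓ x ⊔ k ⊓ y := fun y hx => by
    rw [inf_comm, sup_inf_assoc_of_le y hx, inf_comm y]
    exact sup_le_sup_right (le_inf hx le_rfl) _
  rcases hca' with hca' | hac'
  · exact hmod d (hca'.trans ha'k)
  rcases hdb' with hdb' | hbd'
  · rw [sup_comm c, sup_comm (k ⊓ c)]
    exact hmod c (hdb'.trans hb'k)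
  have hab : a ⊓ b ⊓ (c ⊔ d) ≤ k ⊓ c ⊔ k ⊓ d := by
    rcases hca with hca | hac
    · rcases hdb with hdb | hbd
      · calc a ⊓ b ⊓ (c ⊔ d) = d ⊓ a ⊔ c ⊓ b := by
              rw [inf_comm, ← inf_assoc, sup_inf_assoc_of_le d hca, sup_comm,
                sup_inf_assoc_of_le c (inf_le_left.trans hdb)]
          _ ≤ k ⊓ c ⊔ k ⊓ d := sup_comm (k ⊓ c) _ ▸ sup_le_sup
              (le_inf ((inf_le_inf_right a hdb).trans (inf_comm b a ▸ habk)) inf_le_left)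
              (le_inf ((inf_le_inf_right b hca).trans habk) inf_le_left)
      · exact le_sup_of_le_right (le_inf (inf_le_left.trans habk)
          (inf_le_left.trans (inf_le_right.trans hbd)))
    · exact le_sup_of_le_left (le_inf (inf_le_left.trans habk)
        (inf_le_left.trans (inf_le_left.trans hac)))
  calc k ⊓ (c ⊔ d) = a' ⊔ b' ⊔ a ⊓ b ⊓ (c ⊔ d) := by
        rw [hk, sup_inf_assoc_of_le _ (sup_le_sup hac' hbd')]
    _ ≤ k ⊓ c ⊔ k ⊓ d := sup_le (sup_le (le_sup_of_le_left (le_inf ha'k hac'))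
        (le_sup_of_le_right (le_inf hb'k hbd'))) hab

theorem Cut.mem_lower_or_mem_upper {X : Type} [LinearOrder X] (c : Cut X) (x : X) :
    x ∈ c.lower ∨ x ∈ c.upper :=
  show x ∈ c.lower ∪ c.upper from c.union_eq ▸ Set.mem_univ x

section PersistenceModule

variable {K}
variable {P : Type} [Preorder P] (M : PersistenceModule K P)

theorem range_rho_le {p q r : P} (hpq : p ≤ q) (hqr : q ≤ r) :
    LinearMap.range (rho K M (hpq.trans hqr)) ≤ LinearMap.range (rho K M hqr) := by
  rw [← rho_comp K M hpq hqr]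
  exact LinearMap.range_comp_le_range _ _

theorem ker_rho_le {p q r : P} (hpq : p ≤ q) (hqr : q ≤ r) :
    LinearMap.ker (rho K M hpq) ≤ LinearMap.ker (rho K M (hpq.trans hqr)) := by
  rw [← rho_comp K M hpq hqr]
  exact LinearMap.ker_le_ker_comp _ _

theorem map_map_rho {p q r : P} (hpq : p ≤ q) (hqr : q ≤ r) (N : Submodule K (M.obj p)) :
    (N.map (rho K M hpq)).map (rho K M hqr) = N.map (rho K M (hpq.trans hqr)) := by
  rw [← rho_comp K M hpq hqr, Submodule.map_comp]

theorem comap_ker_rho {p q r : P} (hpq : p ≤ q) (hqr : q ≤ r) :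
    (LinearMap.ker (rho K M hqr)).comap (rho K M hpq) =
      LinearMap.ker (rho K M (hpq.trans hqr)) := by
  rw [← rho_comp K M hpq hqr, LinearMap.ker_comp]

theorem map_ker_rho_le {p q r s : P} (hpq : p ≤ q) (hqs : q ≤ s) (hpr : p ≤ r)
    (hrs : r ≤ s) :
    (LinearMap.ker (rho K M hpq)).map (rho K M hpr) ≤ LinearMap.ker (rho K M hrs) := by
  rw [Submodule.map_le_iff_le_comap, comap_ker_rho]
  exact ker_rho_le M hpq hqs

end PersistenceModule

section Product

variable {K} {X Y : Type} [Preorder X] [Preorder Y] (M : PersistenceModule K (X × Y))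

theorem range_rho_mono_fst {u : X × Y} {x x' : X} (hxx' : x ≤ x') (hx' : x' ≤ u.1) :
    LinearMap.range (rho K M (show (x, u.2) ≤ u from ⟨hxx'.trans hx', le_rfl⟩)) ≤
      LinearMap.range (rho K M (show (x', u.2) ≤ u from ⟨hx', le_rfl⟩)) :=
  range_rho_le M (show (x, u.2) ≤ (x', u.2) from ⟨hxx', le_rfl⟩) _

theorem range_rho_mono_snd {u : X × Y} {y y' : Y} (hyy' : y ≤ y') (hy' : y' ≤ u.2) :
    LinearMap.range (rho K M (show (u.1, y) ≤ u from ⟨le_rfl, hyy'.trans hy'⟩)) ≤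
      LinearMap.range (rho K M (show (u.1, y') ≤ u from ⟨le_rfl, hy'⟩)) :=
  range_rho_le M (show (u.1, y) ≤ (u.1, y') from ⟨le_rfl, hyy'⟩) _

theorem ker_rho_mono_fst {u : X × Y} {x x' : X} (hx : u.1 ≤ x) (hxx' : x ≤ x') :
    LinearMap.ker (rho K M (show u ≤ (x, u.2) from ⟨hx, le_rfl⟩)) ≤
      LinearMap.ker (rho K M (show u ≤ (x', u.2) from ⟨hx.trans hxx', le_rfl⟩)) :=
  ker_rho_le M _ (show (x, u.2) ≤ (x', u.2) from ⟨hxx', le_rfl⟩)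

theorem ker_rho_mono_snd {u : X × Y} {y y' : Y} (hy : u.2 ≤ y) (hyy' : y ≤ y') :
    LinearMap.ker (rho K M (show u ≤ (u.1, y) from ⟨le_rfl, hy⟩)) ≤
      LinearMap.ker (rho K M (show u ≤ (u.1, y') from ⟨le_rfl, hy.trans hyy'⟩)) :=
  ker_rho_le M _ (show (u.1, y) ≤ (u.1, y') from ⟨le_rfl, hyy'⟩)

theorem weaklyExact_subfunctor (S : ∀ p, Submodule K (M.obj p))
    (hS : ∀ (p q : X × Y) (h : p ≤ q), (S p).map (rho K M h) ≤ S q)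
    (hrange : ∀ (s u : X × Y) (h : s ≤ u),
      (S (u.1, s.2)).map (rho K M (show (u.1, s.2) ≤ u from ⟨le_rfl, h.2⟩)) ⊓
        (S (s.1, u.2)).map (rho K M (show (s.1, u.2) ≤ u from ⟨h.1, le_rfl⟩)) ≤
      (S s).map (rho K M h))
    (hker : ∀ (s u : X × Y) (h : s ≤ u),
      S s ⊓ LinearMap.ker (rho K M h) ≤
        S s ⊓ LinearMap.ker (rho K M (show s ≤ (u.1, s.2) from ⟨h.1, le_rfl⟩)) ⊔
          S s ⊓ LinearMap.ker (rho K M (show s ≤ (s.1, u.2) from ⟨le_rfl, h.2⟩))) :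
    WeaklyExact K (subfunctor K M S hS) := by
  intro s u h
  have hsa : s ≤ (u.1, s.2) := ⟨h.1, le_rfl⟩
  have hau : (u.1, s.2) ≤ u := ⟨le_rfl, h.2⟩
  have hsb : s ≤ (s.1, u.2) := ⟨le_rfl, h.2⟩
  have hbu : (s.1, u.2) ≤ u := ⟨h.1, le_rfl⟩
  -- the internal maps of `subfunctor` are restrictions of those of `M`, so `Subtype.val`
  -- turns equations in the submodules into equations in `M`
  constructor
  · refine le_antisymm (le_inf (range_rho_le _ hsa hau) (range_rho_le _ hsb hbu)) ?_
    rintro x ⟨⟨y, hy⟩, ⟨z, hz⟩⟩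
    obtain ⟨v, hv, hvx⟩ := hrange s u h
      ⟨⟨y.1, y.2, congrArg Subtype.val hy⟩, ⟨z.1, z.2, congrArg Subtype.val hz⟩⟩
    exact ⟨⟨v, hv⟩, Subtype.ext hvx⟩
  · refine le_antisymm ?_ (sup_le (ker_rho_le _ hsa hau) (ker_rho_le _ hsb hbu))
    intro x hx
    obtain ⟨y, ⟨hyS, hy⟩, z, ⟨hzS, hz⟩, hyz⟩ :=
      Submodule.mem_sup.1 (hker s u h ⟨x.2, congrArg Subtype.val hx⟩)
    rw [show x = ⟨y, hyS⟩ + ⟨z, hzS⟩ from Subtype.ext hyz.symm]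
    exact Submodule.add_mem_sup (Subtype.ext hy) (Subtype.ext hz)

end Product

section Bimodule

variable {K} {M : PersistenceModule K (X × Y)} {l r : Cut X} {b t : Cut Y}

theorem exists_imPlusH_eq (hM : Pfd K M) {u : X × Y} (hu : u.1 ∈ l.upper) :
    ∃ c, ∃ _ : c ∈ l.upper ∧ c ≤ u.1,
      ∀ x (hx : x ∈ l.upper ∧ x ≤ u.1), x ≤ c →
        LinearMap.range (rho K M (show (x, u.2) ≤ u from ⟨hx.2, le_rfl⟩)) = ImPlusH K M l u :=
  have := hM u
  exists_forall_le_eq_biInf ⟨u.1, hu, le_rfl⟩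
    (f := fun x (hx : x ∈ l.upper ∧ x ≤ u.1) =>
      LinearMap.range (rho K M (show (x, u.2) ≤ u from ⟨hx.2, le_rfl⟩)))
    fun _ _ _ hx' hxx' => range_rho_mono_fst M hxx' hx'.2

theorem exists_imPlusV_eq (hM : Pfd K M) {u : X × Y} (hu : u.2 ∈ b.upper) :
    ∃ c, ∃ _ : c ∈ b.upper ∧ c ≤ u.2,
      ∀ y (hy : y ∈ b.upper ∧ y ≤ u.2), y ≤ c →
        LinearMap.range (rho K M (show (u.1, y) ≤ u from ⟨le_rfl, hy.2⟩)) = ImPlusV K M b u :=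
  have := hM u
  exists_forall_le_eq_biInf ⟨u.2, hu, le_rfl⟩
    (f := fun y (hy : y ∈ b.upper ∧ y ≤ u.2) =>
      LinearMap.range (rho K M (show (u.1, y) ≤ u from ⟨le_rfl, hy.2⟩)))
    fun _ _ _ hy' hyy' => range_rho_mono_snd M hyy' hy'.2

theorem exists_kerPlusH_eq (hM : Pfd K M) {x₀ : X} (hx₀ : x₀ ∈ r.upper) {u : X × Y}
    (hu : u.1 ∈ r.lower) :
    ∃ c, ∃ _ : c ∈ r.upper ∧ u.1 ≤ c,
      ∀ x (hx : x ∈ r.upper ∧ u.1 ≤ x), x ≤ c →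
        LinearMap.ker (rho K M (show u ≤ (x, u.2) from ⟨hx.2, le_rfl⟩)) = KerPlusH K M r u :=
  have := hM u
  exists_forall_le_eq_biInf ⟨x₀, hx₀, (r.lt _ hu _ hx₀).le⟩
    (f := fun x (hx : x ∈ r.upper ∧ u.1 ≤ x) =>
      LinearMap.ker (rho K M (show u ≤ (x, u.2) from ⟨hx.2, le_rfl⟩)))
    fun _ _ hx _ hxx' => ker_rho_mono_fst M hx.2 hxx'

theorem exists_kerPlusV_eq (hM : Pfd K M) {y₀ : Y} (hy₀ : y₀ ∈ t.upper) {u : X × Y}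
    (hu : u.2 ∈ t.lower) :
    ∃ c, ∃ _ : c ∈ t.upper ∧ u.2 ≤ c,
      ∀ y (hy : y ∈ t.upper ∧ u.2 ≤ y), y ≤ c →
        LinearMap.ker (rho K M (show u ≤ (u.1, y) from ⟨le_rfl, hy.2⟩)) = KerPlusV K M t u :=
  have := hM u
  exists_forall_le_eq_biInf ⟨y₀, hy₀, (t.lt _ hu _ hy₀).le⟩
    (f := fun y (hy : y ∈ t.upper ∧ u.2 ≤ y) =>
      LinearMap.ker (rho K M (show u ≤ (u.1, y) from ⟨le_rfl, hy.2⟩)))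
    fun _ _ hy _ hyy' => ker_rho_mono_snd M hy.2 hyy'

theorem exists_kerMinusH_eq (hM : Pfd K M) {u : X × Y} (hu : u.1 ∈ r.lower) :
    ∃ c, ∃ _ : c ∈ r.lower ∧ u.1 ≤ c,
      ∀ x (hx : x ∈ r.lower ∧ u.1 ≤ x), c ≤ x →
        LinearMap.ker (rho K M (show u ≤ (x, u.2) from ⟨hx.2, le_rfl⟩)) = KerMinusH K M r u :=
  have := hM u
  exists_forall_ge_eq_biSup ⟨u.1, hu, le_rfl⟩
    (f := fun x (hx : x ∈ r.lower ∧ u.1 ≤ x) =>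
      LinearMap.ker (rho K M (show u ≤ (x, u.2) from ⟨hx.2, le_rfl⟩)))
    fun _ _ hx _ hxx' => ker_rho_mono_fst M hx.2 hxx'

theorem exists_kerMinusV_eq (hM : Pfd K M) {u : X × Y} (hu : u.2 ∈ t.lower) :
    ∃ c, ∃ _ : c ∈ t.lower ∧ u.2 ≤ c,
      ∀ y (hy : y ∈ t.lower ∧ u.2 ≤ y), c ≤ y →
        LinearMap.ker (rho K M (show u ≤ (u.1, y) from ⟨le_rfl, hy.2⟩)) = KerMinusV K M t u :=
  have := hM u
  exists_forall_ge_eq_biSup ⟨u.2, hu, le_rfl⟩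
    (f := fun y (hy : y ∈ t.lower ∧ u.2 ≤ y) =>
      LinearMap.ker (rho K M (show u ≤ (u.1, y) from ⟨le_rfl, hy.2⟩)))
    fun _ _ hy _ hyy' => ker_rho_mono_snd M hy.2 hyy'

theorem kerMinusH_le_kerPlusH (u : X × Y) : KerMinusH K M r u ≤ KerPlusH K M r u :=
  iSup₂_le fun _ hx => le_iInf₂ fun _ hx' =>
    ker_rho_mono_fst M hx.2 (r.lt _ hx.1 _ hx'.1).le

theorem kerMinusV_le_kerPlusV (u : X × Y) : KerMinusV K M t u ≤ KerPlusV K M t u :=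
  iSup₂_le fun _ hy => le_iInf₂ fun _ hy' =>
    ker_rho_mono_snd M hy.2 (t.lt _ hy.1 _ hy'.1).le

theorem kerPlusH_eq_top (hr : r.upper = ∅) (u : X × Y) : KerPlusH K M r u = ⊤ :=
  eq_top_iff.2 (le_iInf₂ fun _ hx => absurd (hr ▸ hx.1) (Set.notMem_empty _))

theorem kerPlusV_eq_top (ht : t.upper = ∅) (u : X × Y) : KerPlusV K M t u = ⊤ :=
  eq_top_iff.2 (le_iInf₂ fun _ hy => absurd (ht ▸ hy.1) (Set.notMem_empty _))

section Comparable

variable {u : X × Y} {x : X} {y : Y}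

theorem ker_le_kerPlusH_or (hx : u.1 ≤ x) :
    LinearMap.ker (rho K M (show u ≤ (x, u.2) from ⟨hx, le_rfl⟩)) ≤ KerPlusH K M r u ∨
      KerPlusH K M r u ≤ LinearMap.ker (rho K M (show u ≤ (x, u.2) from ⟨hx, le_rfl⟩)) := by
  rcases r.mem_lower_or_mem_upper x with hxr | hxr
  · exact .inl (le_iInf₂ fun x' hx' =>
      ker_rho_mono_fst M hx (r.lt _ hxr _ hx'.1).le)
  · exact .inr (iInf₂_le x ⟨hxr, hx⟩)

theorem ker_le_kerMinusH_or (hx : u.1 ≤ x) :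
    LinearMap.ker (rho K M (show u ≤ (x, u.2) from ⟨hx, le_rfl⟩)) ≤ KerMinusH K M r u ∨
      KerMinusH K M r u ≤
        LinearMap.ker (rho K M (show u ≤ (x, u.2) from ⟨hx, le_rfl⟩)) := by
  rcases r.mem_lower_or_mem_upper x with hxr | hxr
  · exact .inl (le_iSup₂_of_le x ⟨hxr, hx⟩ le_rfl)
  · exact .inr (iSup₂_le fun x' hx' =>
      ker_rho_mono_fst M hx'.2 (r.lt _ hx'.1 _ hxr).le)

theorem ker_le_kerPlusV_or (hy : u.2 ≤ y) :
    LinearMap.ker (rho K M (show u ≤ (u.1, y) from ⟨le_rfl, hy⟩)) ≤ KerPlusV K M t u ∨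
      KerPlusV K M t u ≤ LinearMap.ker (rho K M (show u ≤ (u.1, y) from ⟨le_rfl, hy⟩)) := by
  rcases t.mem_lower_or_mem_upper y with hyt | hyt
  · exact .inl (le_iInf₂ fun y' hy' =>
      ker_rho_mono_snd M hy (t.lt _ hyt _ hy'.1).le)
  · exact .inr (iInf₂_le y ⟨hyt, hy⟩)

theorem ker_le_kerMinusV_or (hy : u.2 ≤ y) :
    LinearMap.ker (rho K M (show u ≤ (u.1, y) from ⟨le_rfl, hy⟩)) ≤ KerMinusV K M t u ∨
      KerMinusV K M t u ≤
        LinearMap.ker (rho K M (show u ≤ (u.1, y) from ⟨le_rfl, hy⟩)) := by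
  rcases t.mem_lower_or_mem_upper y with hyt | hyt
  · exact .inl (le_iSup₂_of_le y ⟨hyt, hy⟩ le_rfl)
  · exact .inr (iSup₂_le fun y' hy' =>
      ker_rho_mono_snd M hy'.2 (t.lt _ hy'.1 _ hyt).le)

end Comparable

theorem kerPlusR_inf_ker_le (hwe : WeaklyExact K M) {p u : X × Y} (h : p ≤ u) :
    KerPlusR K M r t p ⊓ LinearMap.ker (rho K M h) ≤
      KerPlusR K M r t p ⊓
          LinearMap.ker (rho K M (show p ≤ (u.1, p.2) from ⟨h.1, le_rfl⟩)) ⊔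
        KerPlusR K M r t p ⊓
          LinearMap.ker (rho K M (show p ≤ (p.1, u.2) from ⟨le_rfl, h.2⟩)) := by
  rw [(hwe p u h).2]
  exact inf_sup_le_of_chains (kerMinusH_le_kerPlusH p) (kerMinusV_le_kerPlusV p)
    (ker_le_kerMinusH_or h.1) (ker_le_kerPlusH_or h.1)
    (ker_le_kerMinusV_or h.2) (ker_le_kerPlusV_or h.2)

theorem exists_imPlusR_eq_range (hM : Pfd K M) (hwe : WeaklyExact K M) {z w : X × Y}
    (hz1 : z.1 ∈ l.upper) (hz2 : z.2 ∈ b.upper) (hzw : z ≤ w) :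
    ∃ p, ∃ hpz : p ≤ z, ImPlusR K M l b z = LinearMap.range (rho K M hpz) ∧
      ImPlusR K M l b w = LinearMap.range (rho K M (hpz.trans hzw)) := by
  have imPlusR_eq {p u : X × Y} (hpu : p ≤ u)
      (hH : LinearMap.range (rho K M (show (p.1, u.2) ≤ u from ⟨hpu.1, le_rfl⟩)) =
        ImPlusH K M l u)
      (hV : LinearMap.range (rho K M (show (u.1, p.2) ≤ u from ⟨le_rfl, hpu.2⟩)) =
        ImPlusV K M b u) :
      ImPlusR K M l b u = LinearMap.range (rho K M hpu) := by
    rw [ImPlusR, ← hH, ← hV, inf_comm]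
    exact ((hwe p u hpu).1).symm
  obtain ⟨xz, ⟨hxz, hxzz⟩, hHz⟩ := exists_imPlusH_eq hM hz1
  obtain ⟨xw, ⟨hxw, -⟩, hHw⟩ := exists_imPlusH_eq hM (l.mem_upper_of_le hz1 hzw.1)
  obtain ⟨yz, ⟨hyz, hyzz⟩, hVz⟩ := exists_imPlusV_eq hM hz2
  obtain ⟨yw, ⟨hyw, -⟩, hVw⟩ := exists_imPlusV_eq hM (b.mem_upper_of_le hz2 hzw.2)
  have hx : min xz xw ∈ l.upper := min_rec' _ hxz hxw
  have hy : min yz yw ∈ b.upper := min_rec' _ hyz hyw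
  have hpz : (min xz xw, min yz yw) ≤ z :=
    ⟨(min_le_left _ _).trans hxzz, (min_le_left _ _).trans hyzz⟩
  have hpw := hpz.trans hzw
  exact ⟨_, hpz,
    imPlusR_eq hpz (hHz _ ⟨hx, hpz.1⟩ (min_le_left _ _))
      (hVz _ ⟨hy, hpz.2⟩ (min_le_left _ _)),
    imPlusR_eq hpw (hHw _ ⟨hx, hpw.1⟩ (min_le_right _ _))
      (hVw _ ⟨hy, hpw.2⟩ (min_le_right _ _))⟩

theorem comap_kerPlusH_sup_kerMinusV (hM : Pfd K M) (hwe : WeaklyExact K M) {z w : X × Y}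
    (hzw : z ≤ w) (hw1 : w.1 ∈ r.lower) (hw2 : w.2 ∈ t.lower) :
    (KerPlusH K M r w ⊔ KerMinusV K M t w).comap (rho K M hzw) =
      KerPlusH K M r z ⊔ KerMinusV K M t z := by
  rcases r.upper.eq_empty_or_nonempty with hr | ⟨x₀, hx₀⟩
  · rw [kerPlusH_eq_top hr, kerPlusH_eq_top hr, top_sup_eq, top_sup_eq, Submodule.comap_top]
  obtain ⟨xz, ⟨hxz, -⟩, hPz⟩ := exists_kerPlusH_eq hM hx₀ (r.mem_lower_of_le hw1 hzw.1)
  obtain ⟨xw, ⟨hxw, -⟩, hPw⟩ := exists_kerPlusH_eq hM hx₀ hw1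
  obtain ⟨yz, ⟨hyz, hzyz⟩, hMz⟩ := exists_kerMinusV_eq hM (t.mem_lower_of_le hw2 hzw.2)
  obtain ⟨yw, ⟨hyw, hwyw⟩, hMw⟩ := exists_kerMinusV_eq hM hw2
  have hx : min xz xw ∈ r.upper := min_rec' _ hxz hxw
  have hy : max yz yw ∈ t.lower := max_rec' _ hyz hyw
  have hwq : w ≤ (min xz xw, max yz yw) :=
    ⟨(r.lt _ hw1 _ hx).le, hwyw.trans (le_max_right _ _)⟩
  have hzq := hzw.trans hwq
  have ker_eq {u q : X × Y} (huq : u ≤ q)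
      (hplus : LinearMap.ker (rho K M (show u ≤ (q.1, u.2) from ⟨huq.1, le_rfl⟩)) =
        KerPlusH K M r u)
      (hminus : LinearMap.ker (rho K M (show u ≤ (u.1, q.2) from ⟨le_rfl, huq.2⟩)) =
        KerMinusV K M t u) :
      KerPlusH K M r u ⊔ KerMinusV K M t u = LinearMap.ker (rho K M huq) := by
    rw [← hplus, ← hminus]
    exact ((hwe u q huq).2).symm
  rw [ker_eq hwq (hPw _ ⟨hx, hwq.1⟩ (min_le_right _ _))
      (hMw _ ⟨hy, hwq.2⟩ (le_max_right _ _)),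
    ker_eq hzq (hPz _ ⟨hx, hzq.1⟩ (min_le_left _ _)) (hMz _ ⟨hy, hzq.2⟩ (le_max_left _ _)),
    comap_ker_rho]

theorem comap_kerMinusH_sup_kerPlusV (hM : Pfd K M) (hwe : WeaklyExact K M) {z w : X × Y}
    (hzw : z ≤ w) (hw1 : w.1 ∈ r.lower) (hw2 : w.2 ∈ t.lower) :
    (KerMinusH K M r w ⊔ KerPlusV K M t w).comap (rho K M hzw) =
      KerMinusH K M r z ⊔ KerPlusV K M t z := by
  rcases t.upper.eq_empty_or_nonempty with ht | ⟨y₀, hy₀⟩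
  · rw [kerPlusV_eq_top ht, kerPlusV_eq_top ht, sup_top_eq, sup_top_eq, Submodule.comap_top]
  obtain ⟨xz, ⟨hxz, hzxz⟩, hMz⟩ := exists_kerMinusH_eq hM (r.mem_lower_of_le hw1 hzw.1)
  obtain ⟨xw, ⟨hxw, hwxw⟩, hMw⟩ := exists_kerMinusH_eq hM hw1
  obtain ⟨yz, ⟨hyz, -⟩, hPz⟩ := exists_kerPlusV_eq hM hy₀ (t.mem_lower_of_le hw2 hzw.2)
  obtain ⟨yw, ⟨hyw, -⟩, hPw⟩ := exists_kerPlusV_eq hM hy₀ hw2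
  have hx : max xz xw ∈ r.lower := max_rec' _ hxz hxw
  have hy : min yz yw ∈ t.upper := min_rec' _ hyz hyw
  have hwq : w ≤ (max xz xw, min yz yw) :=
    ⟨hwxw.trans (le_max_right _ _), (t.lt _ hw2 _ hy).le⟩
  have hzq := hzw.trans hwq
  have ker_eq {u q : X × Y} (huq : u ≤ q)
      (hminus : LinearMap.ker (rho K M (show u ≤ (q.1, u.2) from ⟨huq.1, le_rfl⟩)) =
        KerMinusH K M r u)
      (hplus : LinearMap.ker (rho K M (show u ≤ (u.1, q.2) from ⟨le_rfl, huq.2⟩)) =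
        KerPlusV K M t u) :
      KerMinusH K M r u ⊔ KerPlusV K M t u = LinearMap.ker (rho K M huq) := by
    rw [← hplus, ← hminus]
    exact ((hwe u q huq).2).symm
  rw [ker_eq hwq (hMw _ ⟨hx, hwq.1⟩ (le_max_right _ _))
      (hPw _ ⟨hy, hwq.2⟩ (min_le_right _ _)),
    ker_eq hzq (hMz _ ⟨hx, hzq.1⟩ (le_max_left _ _)) (hPz _ ⟨hy, hzq.2⟩ (min_le_left _ _)),
    comap_ker_rho]

theorem comap_kerPlusR (hM : Pfd K M) (hwe : WeaklyExact K M) {z w : X × Y} (hzw : z ≤ w)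
    (hw1 : w.1 ∈ r.lower) (hw2 : w.2 ∈ t.lower) :
    (KerPlusR K M r t w).comap (rho K M hzw) = KerPlusR K M r t z := by
  rw [KerPlusR, KerPlusR, Submodule.comap_inf, comap_kerPlusH_sup_kerMinusV hM hwe hzw hw1 hw2,
    comap_kerMinusH_sup_kerPlusV hM hwe hzw hw1 hw2]

theorem vplusAt_eq_map_kerPlusR (hM : Pfd K M) (hwe : WeaklyExact K M) {p z : X × Y}
    (hpz : p ≤ z) (hz1 : z.1 ∈ r.lower) (hz2 : z.2 ∈ t.lower)
    (him : ImPlusR K M l b z = LinearMap.range (rho K M hpz)) :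
    VplusAt K M l r b t z = (KerPlusR K M r t p).map (rho K M hpz) := by
  rw [VplusAt, him, ← Submodule.map_comap_eq, comap_kerPlusR hM hwe hpz hz1 hz2]

theorem map_vplusAt (hM : Pfd K M) (hwe : WeaklyExact K M) {z w : X × Y}
    (hz : z ∈ rectOf l r b t) (hw : w ∈ rectOf l r b t) (hzw : z ≤ w) :
    (VplusAt K M l r b t z).map (rho K M hzw) = VplusAt K M l r b t w := by
  obtain ⟨p, hpz, hImz, hImw⟩ := exists_imPlusR_eq_range hM hwe hz.1.1 hz.2.1 hzw
  rw [vplusAt_eq_map_kerPlusR hM hwe hpz hz.1.2 hz.2.2 hImz,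
    vplusAt_eq_map_kerPlusR hM hwe (hpz.trans hzw) hw.1.2 hw.2.2 hImw, map_map_rho]

theorem inf_mem_rectOf {z w : X × Y} (hz : z ∈ rectOf l r b t) (hw : w ∈ rectOf l r b t) :
    z ⊓ w ∈ rectOf l r b t :=
  ⟨⟨min_rec' _ hz.1.1 hw.1.1, min_rec' _ hz.1.2 hw.1.2⟩,
    min_rec' _ hz.2.1 hw.2.1, min_rec' _ hz.2.2 hw.2.2⟩

theorem vplusSub_eq_map (hM : Pfd K M) (hwe : WeaklyExact K M) {w u : X × Y}
    (hw : w ∈ rectOf l r b t) (hwu : w ≤ u) :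
    VplusSub K M l r b t u = (VplusAt K M l r b t w).map (rho K M hwu) := by
  refine le_antisymm (iSup₂_le fun s hs => ?_) (le_iSup₂_of_le w ⟨hw, hwu⟩ le_rfl)
  have hm := inf_mem_rectOf hs.1 hw
  rw [← map_vplusAt hM hwe hm hs.1 inf_le_left, ← map_vplusAt hM hwe hm hw inf_le_right,
    map_map_rho, map_map_rho]

theorem vplusSub_eq_bot {u : X × Y} (hu : ∀ s ∈ rectOf l r b t, ¬s ≤ u) :
    VplusSub K M l r b t u = ⊥ :=
  le_bot_iff.1 (iSup₂_le fun s hs => (hu s hs.1 hs.2).elim)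

theorem map_vplusSub (hM : Pfd K M) (hwe : WeaklyExact K M) {w u v : X × Y}
    (hw : w ∈ rectOf l r b t) (hwu : w ≤ u) (huv : u ≤ v) :
    (VplusSub K M l r b t u).map (rho K M huv) = VplusSub K M l r b t v := by
  rw [vplusSub_eq_map hM hwe hw hwu, vplusSub_eq_map hM hwe hw (hwu.trans huv), map_map_rho]

theorem vplusSub_range_le (hM : Pfd K M) (hwe : WeaklyExact K M) {s u : X × Y} (h : s ≤ u) :
    (VplusSub K M l r b t (u.1, s.2)).map
          (rho K M (show (u.1, s.2) ≤ u from ⟨le_rfl, h.2⟩)) ⊓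
        (VplusSub K M l r b t (s.1, u.2)).map
          (rho K M (show (s.1, u.2) ≤ u from ⟨h.1, le_rfl⟩)) ≤
      (VplusSub K M l r b t s).map (rho K M h) := by
  by_cases ha : ∃ w ∈ rectOf l r b t, w ≤ (u.1, s.2)
  swap
  · rw [vplusSub_eq_bot fun w hw hwu => ha ⟨w, hw, hwu⟩, Submodule.map_bot, bot_inf_eq]
    exact bot_le
  by_cases hb : ∃ w ∈ rectOf l r b t, w ≤ (s.1, u.2)
  swap
  · rw [vplusSub_eq_bot fun w hw hwu => hb ⟨w, hw, hwu⟩, Submodule.map_bot, inf_bot_eq]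
    exact bot_le
  obtain ⟨wa, hwa, hwaa⟩ := ha
  obtain ⟨wb, hwb, hwbb⟩ := hb
  have hm : wa ⊓ wb ≤ s := ⟨inf_le_right.trans hwbb.1, inf_le_left.trans hwaa.2⟩
  have hmR := inf_mem_rectOf hwa hwb
  rw [map_vplusSub hM hwe hmR (show wa ⊓ wb ≤ (u.1, s.2) from hm.trans ⟨h.1, le_rfl⟩),
    map_vplusSub hM hwe hmR hm]
  exact inf_le_left

theorem vplusSub_inf_ker_le (hM : Pfd K M) (hwe : WeaklyExact K M) {s u : X × Y} (h : s ≤ u) :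
    VplusSub K M l r b t s ⊓ LinearMap.ker (rho K M h) ≤
      VplusSub K M l r b t s ⊓
          LinearMap.ker (rho K M (show s ≤ (u.1, s.2) from ⟨h.1, le_rfl⟩)) ⊔
        VplusSub K M l r b t s ⊓
          LinearMap.ker (rho K M (show s ≤ (s.1, u.2) from ⟨le_rfl, h.2⟩)) := by
  by_cases hs : ∃ w ∈ rectOf l r b t, w ≤ s
  swap
  · rw [vplusSub_eq_bot fun w hw hwu => hs ⟨w, hw, hwu⟩, bot_inf_eq]
    exact bot_le
  obtain ⟨w, hw, hws⟩ := hs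
  obtain ⟨p, hpw, hIm, -⟩ := exists_imPlusR_eq_range hM hwe hw.1.1 hw.2.1 le_rfl
  have hps := hpw.trans hws
  have hS : VplusSub K M l r b t s = (KerPlusR K M r t p).map (rho K M hps) := by
    rw [vplusSub_eq_map hM hwe hw hws, vplusAt_eq_map_kerPlusR hM hwe hpw hw.1.2 hw.2.2 hIm,
      map_map_rho]
  rw [hS, Submodule.map_inf_eq_map_inf_comap, comap_ker_rho]
  refine (Submodule.map_mono (kerPlusR_inf_ker_le hwe (hps.trans h))).trans ?_
  rw [Submodule.map_sup]
  exact sup_le_sup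
    ((Submodule.map_inf_le _).trans (inf_le_inf_left _ (map_ker_rho_le M _
      (show (u.1, p.2) ≤ (u.1, s.2) from ⟨le_rfl, hps.2⟩) hps ⟨h.1, le_rfl⟩)))
    ((Submodule.map_inf_le _).trans (inf_le_inf_left _ (map_ker_rho_le M _
      (show (p.1, u.2) ≤ (s.1, u.2) from ⟨hps.1, le_rfl⟩) hps ⟨le_rfl, h.2⟩)))

end Bimodule

/-- The submodule `V⁺_R(M)` of a pfd weakly exact persistence bimodule,
with the restricted internal maps, is itself weakly exact. -/
theorem vplusMod_weaklyExact
    (K : Type) [Field K] (X Y : Type) [LinearOrder X] [LinearOrder Y]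
    (M : PersistenceModule K (X × Y)) (hM : Pfd K M) (hwe : WeaklyExact K M)
    (l r : Cut X) (b t : Cut Y) :
    WeaklyExact K (VplusMod K M l r b t) :=
  weaklyExact_subfunctor M _ _ (fun _ _ h => vplusSub_range_le hM hwe h)
    (fun _ _ h => vplusSub_inf_ker_le hM hwe h)
end

section
/- Let M be a pointwise finite-dimensional weakly exact persistence module over X×Y, R = (l⁺∩r⁻)×(b⁺∩t⁻) a rectangle, and N = V⁺_R(M) (which is pfd and weakly exact, so its own filtration spaces are defined). Then for every u ∈ R: (i) Im⁺_{l,u}(N) = Im⁺_{b,u}(N) = V⁺_{R,u}(M); (ii) Im⁻_{l,u}(N) = Im⁻_{b,u}(N) = 0; (iii) Ker±_{r,u}(N) = Ker±_{r,u}(M) ∩ V⁺_{R,u}(M); (iv) Ker±_{t,u}(N) = Ker±_{t,u}(M) ∩ V⁺_{R,u}(M). In particular N satisfies the condition Ker⁺_{r,u}(N) ∩ Ker⁺_{t,u}(N) ⊆ Im⁺_{R,u}(N) for all u ∈ R. -/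
open CategoryTheory

attribute [local instance 10000] Preorder.smallCategory

attribute [local instance] Classical.propDecidable

variable (K : Type) [Field K]

variable {X Y : Type} [LinearOrder X] [LinearOrder Y]

/-! The key point is that on `R` the internal maps of `N = V⁺_R(M)` are surjective. Since `M` is
pfd, each of the one-parameter families of images and kernels defining `Im⁺` and `Ker±` stabilises,
so every such space is a single image or kernel. Given `s ≤ u` in `R` and `v ∈ V⁺_{R,u}`, weak
exactness then writes `v` as the image of an element at the corner of the two stabilising images,
whose image at `s` lies in `Im⁺_{R,s}`; dually, weak exactness splits the kernel of a map to the
corner of the two stabilising kernels, which shows that this element lies in `Ker⁺_{R,s}`.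
Surjectivity makes `Im⁺(N)` everything, `N` vanishes to the left of and below `R` so `Im⁻(N) = 0`,
and the kernel spaces of `N` are those of `M` cut down to `N`, `Ker⁻` because it is a single
kernel. -/

section ChainsOfSubmodules

variable {K} {V : Type} [AddCommGroup V] [Module K V] [FiniteDimensional K V]
  {ι : Type} [LinearOrder ι] {p : ι → Prop}

theorem Submodule.exists_biInf_eq_of_monotone (f : ∀ i, p i → Submodule K V)
    (hf : ∀ i j (hi : p i) (hj : p j), i ≤ j → f i hi ≤ f j hj) (hp : ∃ i, p i) :
    ∃ i, ∃ hi : p i, ⨅ j, ⨅ hj : p j, f j hj = f i hi := by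
  obtain ⟨_, ⟨i, hi, rfl⟩, hmin⟩ :=
    wellFounded_lt.has_min {q | ∃ i hi, f i hi = q} (hp.elim fun i hi => ⟨_, i, hi, rfl⟩)
  refine ⟨i, hi, le_antisymm (iInf₂_le i hi) (le_iInf₂ fun j hj => ?_)⟩
  rcases le_total i j with hij | hji
  · exact hf i j hi hj hij
  · exact ((hf j i hj hi hji).eq_or_lt.resolve_right (hmin _ ⟨j, hj, rfl⟩)).ge

theorem Submodule.exists_biSup_eq_of_monotone (f : ∀ i, p i → Submodule K V)
    (hf : ∀ i j (hi : p i) (hj : p j), i ≤ j → f i hi ≤ f j hj) (hp : ∃ i, p i) :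
    ∃ i, ∃ hi : p i, ⨆ j, ⨆ hj : p j, f j hj = f i hi := by
  obtain ⟨_, ⟨i, hi, rfl⟩, hmax⟩ :=
    wellFounded_gt.has_min {q | ∃ i hi, f i hi = q} (hp.elim fun i hi => ⟨_, i, hi, rfl⟩)
  refine ⟨i, hi, le_antisymm (iSup₂_le fun j hj => ?_) (le_iSup₂ (f := f) i hi)⟩
  rcases le_total i j with hij | hji
  · exact ((hf i j hi hj hij).eq_or_lt.resolve_right (hmax _ ⟨j, hj, rfl⟩)).ge
  · exact hf j i hj hi hji

end ChainsOfSubmodules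

section InternalMaps

variable {P : Type} [Preorder P] (M : PersistenceModule K P)

theorem rho_rho_apply {p q w : P} (h₁ : p ≤ q) (h₂ : q ≤ w) (v : M.obj p) :
    rho K M h₂ (rho K M h₁ v) = rho K M (h₁.trans h₂) v :=
  DFunLike.congr_fun (rho_comp K M h₁ h₂) v

theorem rho_refl_apply (p : P) (v : M.obj p) : rho K M (le_refl p) v = v := by
  show (M.map (𝟙 p)).hom v = v
  rw [M.map_id]
  rfl

theorem range_rho_trans_le {p q w : P} (h₁ : p ≤ q) (h₂ : q ≤ w) :
    LinearMap.range (rho K M (h₁.trans h₂)) ≤ LinearMap.range (rho K M h₂) :=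
  rho_comp K M h₁ h₂ ▸ LinearMap.range_comp_le_range _ _

theorem ker_rho_le_ker_rho_trans {p q w : P} (h₁ : p ≤ q) (h₂ : q ≤ w) :
    LinearMap.ker (rho K M h₁) ≤ LinearMap.ker (rho K M (h₁.trans h₂)) :=
  rho_comp K M h₁ h₂ ▸ LinearMap.ker_le_ker_comp _ _

theorem map_range_rho_le {a s a' u : P} (has : a ≤ s) (hsu : s ≤ u) (haa' : a ≤ a')
    (ha'u : a' ≤ u) :
    (LinearMap.range (rho K M has)).map (rho K M hsu) ≤ LinearMap.range (rho K M ha'u) := by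
  rw [← LinearMap.range_comp, rho_comp]
  exact range_rho_trans_le K M haa' ha'u

theorem map_ker_rho_le_s9 {s a u a' : P} (hsa : s ≤ a) (hsu : s ≤ u) (haa' : a ≤ a')
    (hua' : u ≤ a') :
    (LinearMap.ker (rho K M hsa)).map (rho K M hsu) ≤ LinearMap.ker (rho K M hua') := by
  rw [Submodule.map_le_iff_le_comap, ← LinearMap.ker_comp, rho_comp]
  exact ker_rho_le_ker_rho_trans K M hsa haa'

variable (S : ∀ p, Submodule K (M.obj p))
  (hS : ∀ (p q : P) (h : p ≤ q), (S p).map (rho K M h) ≤ S q)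

theorem ker_rho_subfunctor {p q : P} (h : p ≤ q) :
    LinearMap.ker (rho K (subfunctor K M S hS) h) =
      (LinearMap.ker (rho K M h)).comap (S p).subtype := by
  ext w
  exact Submodule.coe_eq_zero.symm

theorem rho_subfunctor_surjective {p q : P} (h : p ≤ q) (hsurj : S q ≤ (S p).map (rho K M h)) :
    Function.Surjective (rho K (subfunctor K M S hS) h) := by
  rintro ⟨v, hv⟩
  obtain ⟨w, hw, rfl⟩ := hsurj hv
  exact ⟨⟨w, hw⟩, rfl⟩

theorem rho_subfunctor_eq_zero {p q : P} (h : p ≤ q) (hp : S p = ⊥) :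
    rho K (subfunctor K M S hS) h = 0 := by
  ext ⟨w, hw⟩
  rw [hp, Submodule.mem_bot] at hw
  subst hw
  exact map_zero _

end InternalMaps

section Stabilisation

variable {M : PersistenceModule K (X × Y)}

theorem exists_ImPlusH_eq_range (hM : Pfd K M) (l : Cut X) {u : X × Y} (hu : u.1 ∈ l.upper) :
    ∃ x, ∃ hx : x ∈ l.upper ∧ x ≤ u.1,
      ImPlusH K M l u = LinearMap.range (rho K M (show (x, u.2) ≤ u from ⟨hx.2, le_rfl⟩)) :=
  haveI := hM u
  Submodule.exists_biInf_eq_of_monotone _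
    (fun _ _ _ _ hij => range_rho_trans_le K M (Prod.mk_le_mk.mpr ⟨hij, le_rfl⟩) _)
    ⟨u.1, hu, le_rfl⟩

theorem exists_ImPlusV_eq_range (hM : Pfd K M) (b : Cut Y) {u : X × Y} (hu : u.2 ∈ b.upper) :
    ∃ y, ∃ hy : y ∈ b.upper ∧ y ≤ u.2,
      ImPlusV K M b u = LinearMap.range (rho K M (show (u.1, y) ≤ u from ⟨le_rfl, hy.2⟩)) :=
  haveI := hM u
  Submodule.exists_biInf_eq_of_monotone _
    (fun _ _ _ _ hij => range_rho_trans_le K M (Prod.mk_le_mk.mpr ⟨le_rfl, hij⟩) _)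
    ⟨u.2, hu, le_rfl⟩

theorem exists_KerPlusH_eq_ker (hM : Pfd K M) (r : Cut X) {u : X × Y}
    (hr : ∃ x, x ∈ r.upper ∧ u.1 ≤ x) :
    ∃ x, ∃ hx : x ∈ r.upper ∧ u.1 ≤ x,
      KerPlusH K M r u = LinearMap.ker (rho K M (show u ≤ (x, u.2) from ⟨hx.2, le_rfl⟩)) :=
  haveI := hM u
  Submodule.exists_biInf_eq_of_monotone _
    (fun _ _ _ _ hij => ker_rho_le_ker_rho_trans K M _ (Prod.mk_le_mk.mpr ⟨hij, le_rfl⟩)) hr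

theorem exists_KerPlusV_eq_ker (hM : Pfd K M) (t : Cut Y) {u : X × Y}
    (ht : ∃ y, y ∈ t.upper ∧ u.2 ≤ y) :
    ∃ y, ∃ hy : y ∈ t.upper ∧ u.2 ≤ y,
      KerPlusV K M t u = LinearMap.ker (rho K M (show u ≤ (u.1, y) from ⟨le_rfl, hy.2⟩)) :=
  haveI := hM u
  Submodule.exists_biInf_eq_of_monotone _
    (fun _ _ _ _ hij => ker_rho_le_ker_rho_trans K M _ (Prod.mk_le_mk.mpr ⟨le_rfl, hij⟩)) ht

theorem exists_KerMinusH_eq_ker (hM : Pfd K M) (r : Cut X) {u : X × Y} (hu : u.1 ∈ r.lower) :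
    ∃ x, ∃ hx : x ∈ r.lower ∧ u.1 ≤ x,
      KerMinusH K M r u = LinearMap.ker (rho K M (show u ≤ (x, u.2) from ⟨hx.2, le_rfl⟩)) :=
  haveI := hM u
  Submodule.exists_biSup_eq_of_monotone _
    (fun _ _ _ _ hij => ker_rho_le_ker_rho_trans K M _ (Prod.mk_le_mk.mpr ⟨hij, le_rfl⟩))
    ⟨u.1, hu, le_rfl⟩

theorem exists_KerMinusV_eq_ker (hM : Pfd K M) (t : Cut Y) {u : X × Y} (hu : u.2 ∈ t.lower) :
    ∃ y, ∃ hy : y ∈ t.lower ∧ u.2 ≤ y,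
      KerMinusV K M t u = LinearMap.ker (rho K M (show u ≤ (u.1, y) from ⟨le_rfl, hy.2⟩)) :=
  haveI := hM u
  Submodule.exists_biSup_eq_of_monotone _
    (fun _ _ _ _ hij => ker_rho_le_ker_rho_trans K M _ (Prod.mk_le_mk.mpr ⟨le_rfl, hij⟩))
    ⟨u.2, hu, le_rfl⟩

end Stabilisation

section Subfunctors

variable {M : PersistenceModule K (X × Y)} (S : ∀ p, Submodule K (M.obj p))
  (hS : ∀ (p q : X × Y) (h : p ≤ q), (S p).map (rho K M h) ≤ S q)

theorem KerPlusH_subfunctor (r : Cut X) (u : X × Y) :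
    KerPlusH K (subfunctor K M S hS) r u = (KerPlusH K M r u).comap (S u).subtype := by
  simp only [KerPlusH, ker_rho_subfunctor, Submodule.comap_iInf]
  rfl

theorem KerPlusV_subfunctor (t : Cut Y) (u : X × Y) :
    KerPlusV K (subfunctor K M S hS) t u = (KerPlusV K M t u).comap (S u).subtype := by
  simp only [KerPlusV, ker_rho_subfunctor, Submodule.comap_iInf]
  rfl

theorem KerMinusH_subfunctor (hM : Pfd K M) {r : Cut X} {u : X × Y} (hu : u.1 ∈ r.lower) :
    KerMinusH K (subfunctor K M S hS) r u = (KerMinusH K M r u).comap (S u).subtype := by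
  obtain ⟨x, hx, hKer⟩ := exists_KerMinusH_eq_ker K hM r hu
  refine le_antisymm (iSup₂_le fun x' hx' => ?_) ?_
  · rw [ker_rho_subfunctor]
    exact Submodule.comap_mono (le_iSup₂_of_le x' hx' le_rfl)
  · rw [hKer, ← ker_rho_subfunctor]
    exact le_iSup₂_of_le x hx le_rfl

theorem KerMinusV_subfunctor (hM : Pfd K M) {t : Cut Y} {u : X × Y} (hu : u.2 ∈ t.lower) :
    KerMinusV K (subfunctor K M S hS) t u = (KerMinusV K M t u).comap (S u).subtype := by
  obtain ⟨y, hy, hKer⟩ := exists_KerMinusV_eq_ker K hM t hu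
  refine le_antisymm (iSup₂_le fun y' hy' => ?_) ?_
  · rw [ker_rho_subfunctor]
    exact Submodule.comap_mono (le_iSup₂_of_le y' hy' le_rfl)
  · rw [hKer, ← ker_rho_subfunctor]
    exact le_iSup₂_of_le y hy le_rfl

end Subfunctors

section Functoriality

variable (M : PersistenceModule K (X × Y)) {s u : X × Y} (h : s ≤ u)

theorem map_ImPlusH_le (l : Cut X) : (ImPlusH K M l s).map (rho K M h) ≤ ImPlusH K M l u := by
  refine le_iInf₂ fun x hx => ?_
  rcases le_total x s.1 with hxs | hsx
  · exact (Submodule.map_mono (iInf₂_le x ⟨hx.1, hxs⟩)).trans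
      (map_range_rho_le K M _ h (Prod.mk_le_mk.mpr ⟨le_rfl, h.2⟩) _)
  · exact LinearMap.map_le_range.trans
      (range_rho_trans_le K M (Prod.mk_le_mk.mpr ⟨hsx, h.2⟩ : s ≤ (x, u.2)) _)

theorem map_ImPlusV_le (b : Cut Y) : (ImPlusV K M b s).map (rho K M h) ≤ ImPlusV K M b u := by
  refine le_iInf₂ fun y hy => ?_
  rcases le_total y s.2 with hys | hsy
  · exact (Submodule.map_mono (iInf₂_le y ⟨hy.1, hys⟩)).trans
      (map_range_rho_le K M _ h (Prod.mk_le_mk.mpr ⟨h.1, le_rfl⟩) _)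
  · exact LinearMap.map_le_range.trans
      (range_rho_trans_le K M (Prod.mk_le_mk.mpr ⟨h.1, hsy⟩ : s ≤ (u.1, y)) _)

theorem map_KerPlusH_le (r : Cut X) : (KerPlusH K M r s).map (rho K M h) ≤ KerPlusH K M r u :=
  le_iInf₂ fun x hx => (Submodule.map_mono (iInf₂_le x ⟨hx.1, h.1.trans hx.2⟩)).trans
    (map_ker_rho_le_s9 K M _ h (Prod.mk_le_mk.mpr ⟨le_rfl, h.2⟩) _)

theorem map_KerPlusV_le (t : Cut Y) : (KerPlusV K M t s).map (rho K M h) ≤ KerPlusV K M t u :=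
  le_iInf₂ fun y hy => (Submodule.map_mono (iInf₂_le y ⟨hy.1, h.2.trans hy.2⟩)).trans
    (map_ker_rho_le_s9 K M _ h (Prod.mk_le_mk.mpr ⟨h.1, le_rfl⟩) _)

theorem map_KerMinusH_le (r : Cut X) :
    (KerMinusH K M r s).map (rho K M h) ≤ KerMinusH K M r u := by
  refine Submodule.map_le_iff_le_comap.mpr (iSup₂_le fun x hx => ?_)
  rw [← Submodule.map_le_iff_le_comap]
  rcases le_total u.1 x with hux | hxu
  · exact (map_ker_rho_le_s9 K M _ h (Prod.mk_le_mk.mpr ⟨le_rfl, h.2⟩) _).trans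
      (le_iSup₂_of_le x ⟨hx.1, hux⟩ le_rfl)
  · exact Submodule.map_le_iff_le_comap.mpr
      ((ker_rho_le_ker_rho_trans K M _ (Prod.mk_le_mk.mpr ⟨hxu, h.2⟩ : (x, s.2) ≤ u)).trans
        (Submodule.comap_mono bot_le))

theorem map_KerMinusV_le (t : Cut Y) :
    (KerMinusV K M t s).map (rho K M h) ≤ KerMinusV K M t u := by
  refine Submodule.map_le_iff_le_comap.mpr (iSup₂_le fun y hy => ?_)
  rw [← Submodule.map_le_iff_le_comap]
  rcases le_total u.2 y with huy | hyu
  · exact (map_ker_rho_le_s9 K M _ h (Prod.mk_le_mk.mpr ⟨h.1, le_rfl⟩) _).trans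
      (le_iSup₂_of_le y ⟨hy.1, huy⟩ le_rfl)
  · exact Submodule.map_le_iff_le_comap.mpr
      ((ker_rho_le_ker_rho_trans K M _ (Prod.mk_le_mk.mpr ⟨h.1, hyu⟩ : (s.1, y) ≤ u)).trans
        (Submodule.comap_mono bot_le))

theorem map_VplusAt_le (l r : Cut X) (b t : Cut Y) :
    (VplusAt K M l r b t s).map (rho K M h) ≤ VplusAt K M l r b t u := by
  refine (Submodule.map_inf_le _).trans (inf_le_inf ?_ ?_)
  · exact (Submodule.map_inf_le _).trans
      (inf_le_inf (map_ImPlusH_le K M h l) (map_ImPlusV_le K M h b))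
  · refine (Submodule.map_inf_le _).trans (inf_le_inf ?_ ?_) <;> rw [Submodule.map_sup]
    · exact sup_le_sup (map_KerPlusH_le K M h r) (map_KerMinusV_le K M h t)
    · exact sup_le_sup (map_KerMinusH_le K M h r) (map_KerPlusV_le K M h t)

end Functoriality

section Surjectivity

variable {M : PersistenceModule K (X × Y)} {s u : X × Y} (h : s ≤ u)

theorem exists_preimage_mem_ImPlusR (hM : Pfd K M) (hwe : WeaklyExact K M) {l : Cut X}
    {b : Cut Y} (hs : s.1 ∈ l.upper ∧ s.2 ∈ b.upper)
    {v : M.obj u} (hv : v ∈ ImPlusR K M l b u) :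
    ∃ w ∈ ImPlusR K M l b s, rho K M h w = v := by
  obtain ⟨x, hx, hImH⟩ := exists_ImPlusH_eq_range K hM l hs.1
  obtain ⟨y, hy, hImV⟩ := exists_ImPlusV_eq_range K hM b hs.2
  have hvx : v ∈ LinearMap.range (rho K M (Prod.mk_le_mk.mpr ⟨hx.2.trans h.1, le_rfl⟩ :
      (x, u.2) ≤ u)) := (iInf₂_le x ⟨hx.1, hx.2.trans h.1⟩ : ImPlusH K M l u ≤ _) hv.1
  have hvy : v ∈ LinearMap.range (rho K M (Prod.mk_le_mk.mpr ⟨le_rfl, hy.2.trans h.2⟩ :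
      (u.1, y) ≤ u)) := (iInf₂_le y ⟨hy.1, hy.2.trans h.2⟩ : ImPlusV K M b u ≤ _) hv.2
  have hxy : (x, y) ≤ s := Prod.mk_le_mk.mpr ⟨hx.2, hy.2⟩
  obtain ⟨z, rfl⟩ : v ∈ LinearMap.range (rho K M (hxy.trans h)) := by
    rw [(hwe _ _ _).1]
    exact ⟨hvy, hvx⟩
  refine ⟨rho K M hxy z, ⟨?_, ?_⟩, rho_rho_apply K M hxy h z⟩
  · rw [hImH]
    exact range_rho_trans_le K M (Prod.mk_le_mk.mpr ⟨le_rfl, hy.2⟩ : (x, y) ≤ (x, s.2)) _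
      (LinearMap.mem_range_self _ z)
  · rw [hImV]
    exact range_rho_trans_le K M (Prod.mk_le_mk.mpr ⟨hx.2, le_rfl⟩ : (x, y) ≤ (s.1, y)) _
      (LinearMap.mem_range_self _ z)

theorem comap_KerPlusH_sup_KerMinusV_le (hM : Pfd K M) (hwe : WeaklyExact K M) {r : Cut X}
    {t : Cut Y} (hu : u.1 ∈ r.lower ∧ u.2 ∈ t.lower) :
    (KerPlusH K M r u ⊔ KerMinusV K M t u).comap (rho K M h) ≤
      KerPlusH K M r s ⊔ KerMinusV K M t s := by
  by_cases hr : ∃ x, x ∈ r.upper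
  swap
  · exact le_sup_of_le_left (le_iInf₂ fun x hx => (hr ⟨x, hx.1⟩).elim)
  obtain ⟨x₀, hx₀⟩ := hr
  have hs : s.1 ∈ r.lower := r.mem_lower_of_le hu.1 h.1
  obtain ⟨x, hx, hKerH⟩ := exists_KerPlusH_eq_ker K hM r ⟨x₀, hx₀, (r.lt _ hs _ hx₀).le⟩
  obtain ⟨y, hy, hKerV⟩ := exists_KerMinusV_eq_ker K hM t hu.2
  have hux : u.1 ≤ x := (r.lt _ hu.1 _ hx.1).le
  have hcorner : u ≤ (x, y) := Prod.mk_le_mk.mpr ⟨hux, hy.2⟩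
  have hker : KerPlusH K M r u ⊔ KerMinusV K M t u ≤ LinearMap.ker (rho K M hcorner) :=
    sup_le ((iInf₂_le x ⟨hx.1, hux⟩).trans
        (ker_rho_le_ker_rho_trans K M _ (Prod.mk_le_mk.mpr ⟨le_rfl, hy.2⟩)))
      (hKerV.le.trans (ker_rho_le_ker_rho_trans K M _ (Prod.mk_le_mk.mpr ⟨hux, le_rfl⟩)))
  calc (KerPlusH K M r u ⊔ KerMinusV K M t u).comap (rho K M h)
      ≤ (LinearMap.ker (rho K M hcorner)).comap (rho K M h) := Submodule.comap_mono hker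
    _ = LinearMap.ker (rho K M (h.trans hcorner)) := by rw [← LinearMap.ker_comp, rho_comp]
    _ = LinearMap.ker (rho K M (Prod.mk_le_mk.mpr ⟨hx.2, le_rfl⟩ : s ≤ (x, s.2))) ⊔
          LinearMap.ker (rho K M (Prod.mk_le_mk.mpr ⟨le_rfl, h.2.trans hy.2⟩ : s ≤ (s.1, y))) :=
      (hwe s (x, y) _).2
    _ ≤ KerPlusH K M r s ⊔ KerMinusV K M t s :=
      sup_le_sup hKerH.ge (le_iSup₂_of_le y ⟨hy.1, h.2.trans hy.2⟩ le_rfl)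

theorem comap_KerMinusH_sup_KerPlusV_le (hM : Pfd K M) (hwe : WeaklyExact K M) {r : Cut X}
    {t : Cut Y} (hu : u.1 ∈ r.lower ∧ u.2 ∈ t.lower) :
    (KerMinusH K M r u ⊔ KerPlusV K M t u).comap (rho K M h) ≤
      KerMinusH K M r s ⊔ KerPlusV K M t s := by
  by_cases ht : ∃ y, y ∈ t.upper
  swap
  · exact le_sup_of_le_right (le_iInf₂ fun y hy => (ht ⟨y, hy.1⟩).elim)
  obtain ⟨y₀, hy₀⟩ := ht
  have hs : s.2 ∈ t.lower := t.mem_lower_of_le hu.2 h.2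
  obtain ⟨y, hy, hKerV⟩ := exists_KerPlusV_eq_ker K hM t ⟨y₀, hy₀, (t.lt _ hs _ hy₀).le⟩
  obtain ⟨x, hx, hKerH⟩ := exists_KerMinusH_eq_ker K hM r hu.1
  have huy : u.2 ≤ y := (t.lt _ hu.2 _ hy.1).le
  have hcorner : u ≤ (x, y) := Prod.mk_le_mk.mpr ⟨hx.2, huy⟩
  have hker : KerMinusH K M r u ⊔ KerPlusV K M t u ≤ LinearMap.ker (rho K M hcorner) :=
    sup_le (hKerH.le.trans (ker_rho_le_ker_rho_trans K M _ (Prod.mk_le_mk.mpr ⟨le_rfl, huy⟩)))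
      ((iInf₂_le y ⟨hy.1, huy⟩).trans
        (ker_rho_le_ker_rho_trans K M _ (Prod.mk_le_mk.mpr ⟨hx.2, le_rfl⟩)))
  calc (KerMinusH K M r u ⊔ KerPlusV K M t u).comap (rho K M h)
      ≤ (LinearMap.ker (rho K M hcorner)).comap (rho K M h) := Submodule.comap_mono hker
    _ = LinearMap.ker (rho K M (h.trans hcorner)) := by rw [← LinearMap.ker_comp, rho_comp]
    _ = LinearMap.ker (rho K M (Prod.mk_le_mk.mpr ⟨h.1.trans hx.2, le_rfl⟩ : s ≤ (x, s.2))) ⊔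
          LinearMap.ker (rho K M (Prod.mk_le_mk.mpr ⟨le_rfl, hy.2⟩ : s ≤ (s.1, y))) :=
      (hwe s (x, y) _).2
    _ ≤ KerMinusH K M r s ⊔ KerPlusV K M t s :=
      sup_le_sup (le_iSup₂_of_le x ⟨hx.1, h.1.trans hx.2⟩ le_rfl) hKerV.ge

theorem VplusAt_le_map_VplusAt (hM : Pfd K M) (hwe : WeaklyExact K M) {l r : Cut X}
    {b t : Cut Y} (hs : s ∈ rectOf l r b t) (hu : u ∈ rectOf l r b t) :
    VplusAt K M l r b t u ≤ (VplusAt K M l r b t s).map (rho K M h) := by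
  rintro v ⟨hvIm, hvH, hvV⟩
  obtain ⟨w, hw, rfl⟩ := exists_preimage_mem_ImPlusR K h hM hwe ⟨hs.1.1, hs.2.1⟩ hvIm
  have hu' : u.1 ∈ r.lower ∧ u.2 ∈ t.lower := ⟨hu.1.2, hu.2.2⟩
  exact ⟨w, ⟨hw, comap_KerPlusH_sup_KerMinusV_le K h hM hwe hu' hvH,
    comap_KerMinusH_sup_KerPlusV_le K h hM hwe hu' hvV⟩, rfl⟩

end Surjectivity

section DoubleFiltration

variable {l r : Cut X} {b t : Cut Y}

theorem VplusSub_eq_VplusAt (M : PersistenceModule K (X × Y)) {u : X × Y}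
    (hu : u ∈ rectOf l r b t) : VplusSub K M l r b t u = VplusAt K M l r b t u :=
  le_antisymm (iSup₂_le fun _ hs => map_VplusAt_le K M hs.2 l r b t)
    (le_iSup₂_of_le u ⟨hu, le_rfl⟩ fun v hv => ⟨v, hv, rho_refl_apply K M u v⟩)

theorem rho_VplusMod_surjective {M : PersistenceModule K (X × Y)} (hM : Pfd K M)
    (hwe : WeaklyExact K M) {s u : X × Y} (hs : s ∈ rectOf l r b t) (hu : u ∈ rectOf l r b t)
    (h : s ≤ u) :
    Function.Surjective (rho K (VplusMod K M l r b t) h) :=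
  rho_subfunctor_surjective K M _ _ h (by
    rw [VplusSub_eq_VplusAt K M hs, VplusSub_eq_VplusAt K M hu]
    exact VplusAt_le_map_VplusAt K h hM hwe hs hu)

theorem ImPlusH_VplusMod_eq_top {M : PersistenceModule K (X × Y)} (hM : Pfd K M)
    (hwe : WeaklyExact K M) {u : X × Y} (hu : u ∈ rectOf l r b t) :
    ImPlusH K (VplusMod K M l r b t) l u = ⊤ :=
  eq_top_iff.mpr <| le_iInf₂ fun x hx => (LinearMap.range_eq_top.mpr
    (rho_VplusMod_surjective K hM hwe (s := (x, u.2))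
      ⟨⟨hx.1, r.mem_lower_of_le hu.1.2 hx.2⟩, hu.2⟩ hu _)).ge

theorem ImPlusV_VplusMod_eq_top {M : PersistenceModule K (X × Y)} (hM : Pfd K M)
    (hwe : WeaklyExact K M) {u : X × Y} (hu : u ∈ rectOf l r b t) :
    ImPlusV K (VplusMod K M l r b t) b u = ⊤ :=
  eq_top_iff.mpr <| le_iInf₂ fun y hy => (LinearMap.range_eq_top.mpr
    (rho_VplusMod_surjective K hM hwe (s := (u.1, y))
      ⟨hu.1, hy.1, t.mem_lower_of_le hu.2.2 hy.2⟩ hu _)).ge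

theorem VplusSub_eq_bot (M : PersistenceModule K (X × Y)) {w : X × Y}
    (hw : ∀ s ∈ rectOf l r b t, ¬s ≤ w) : VplusSub K M l r b t w = ⊥ :=
  le_bot_iff.mp (iSup₂_le fun s hs => (hw s hs.1 hs.2).elim)

theorem ImMinusH_VplusMod_eq_bot (M : PersistenceModule K (X × Y)) (u : X × Y) :
    ImMinusH K (VplusMod K M l r b t) l u = ⊥ :=
  le_bot_iff.mp <| iSup₂_le fun x hx => (LinearMap.range_eq_bot.mpr
    (rho_subfunctor_eq_zero K M _ _ _ (VplusSub_eq_bot K M fun s hs hsx =>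
      (l.lt x hx.1 s.1 hs.1.1).not_ge hsx.1))).le

theorem ImMinusV_VplusMod_eq_bot (M : PersistenceModule K (X × Y)) (u : X × Y) :
    ImMinusV K (VplusMod K M l r b t) b u = ⊥ :=
  le_bot_iff.mp <| iSup₂_le fun y hy => (LinearMap.range_eq_bot.mpr
    (rho_subfunctor_eq_zero K M _ _ _ (VplusSub_eq_bot K M fun s hs hsy =>
      (b.lt y hy.1 s.2 hs.2.1).not_ge hsy.2))).le

end DoubleFiltration

/-- **Statement 10.** Computation of the filtration spaces of the double filtration, i.e. of
the filtration spaces of `N = V⁺_R(M)`, at points of `R`. -/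
theorem double_filtration_computations
    (K : Type) [Field K] (X Y : Type) [LinearOrder X] [LinearOrder Y]
    (M : PersistenceModule K (X × Y)) (hM : Pfd K M) (hwe : WeaklyExact K M)
    (l r : Cut X) (b t : Cut Y) :
    ∀ u ∈ rectOf l r b t,
      ImPlusH K (VplusMod K M l r b t) l u =
        Submodule.comap (VplusSub K M l r b t u).subtype (VplusAt K M l r b t u) ∧
      ImPlusV K (VplusMod K M l r b t) b u =
        Submodule.comap (VplusSub K M l r b t u).subtype (VplusAt K M l r b t u) ∧
      ImMinusH K (VplusMod K M l r b t) l u = ⊥ ∧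
      ImMinusV K (VplusMod K M l r b t) b u = ⊥ ∧
      KerPlusH K (VplusMod K M l r b t) r u =
        Submodule.comap (VplusSub K M l r b t u).subtype (KerPlusH K M r u) ∧
      KerMinusH K (VplusMod K M l r b t) r u =
        Submodule.comap (VplusSub K M l r b t u).subtype (KerMinusH K M r u) ∧
      KerPlusV K (VplusMod K M l r b t) t u =
        Submodule.comap (VplusSub K M l r b t u).subtype (KerPlusV K M t u) ∧
      KerMinusV K (VplusMod K M l r b t) t u =
        Submodule.comap (VplusSub K M l r b t u).subtype (KerMinusV K M t u) ∧
      KerPlusH K (VplusMod K M l r b t) r u ⊓ KerPlusV K (VplusMod K M l r b t) t u ≤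
        ImPlusR K (VplusMod K M l r b t) l b u := by
  intro u hu
  have hImH := ImPlusH_VplusMod_eq_top K hM hwe hu
  have hImV := ImPlusV_VplusMod_eq_top K hM hwe hu
  have hV : (VplusAt K M l r b t u).comap (VplusSub K M l r b t u).subtype = ⊤ := by
    rw [← VplusSub_eq_VplusAt K M hu, Submodule.comap_subtype_self]
  refine ⟨hImH.trans hV.symm, hImV.trans hV.symm, ImMinusH_VplusMod_eq_bot K M u,
    ImMinusV_VplusMod_eq_bot K M u, ?_, ?_, ?_, ?_, ?_⟩
  · exact KerPlusH_subfunctor K _ _ r u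
  · exact KerMinusH_subfunctor K _ _ hM hu.1.2
  · exact KerPlusV_subfunctor K _ _ t u
  · exact KerMinusV_subfunctor K _ _ hM hu.2.2
  rw [ImPlusR, hImH, hImV, inf_top_eq]
  exact le_top
end
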